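/- arXiv:0804.3049 — 9 statements merged into one kernel-verified Lean document; each statement's English description precedes it below -/
import Mathlib

section
/- Let p be a prime and d a positive integer. For a formal power series S(z) in d variables z = (z_1,...,z_d) with coefficients in Q_p and constant term 1, S(z) has all its coefficients in Z_p if and only if S(z_1^p,...,z_d^p)/S(z)^p ≡ 1 modulo p·(z_1,...,z_d)·Z_p[[z]] (i.e., S(z^p)/S(z)^p lies in 1 + p·∑_i z_i·Z_p[[z]]). -/
/-!
Reducing modulo `p`, Frobenius is the identity on `𝔽_p`, so `S(z^p) ≡ S(z)^p` for every `S` with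
coefficients in `ℤ_p`; this gives the forward direction with `R = S(z^p) / S(z)^p`.

Conversely, argue by well-founded induction on the exponent `n`. If all coefficients of `S` below
`n` are integral, the truncation `T` of `S` below `n` is integral, so by the forward argument
`T(z^p) - T^p R` has all coefficients in `pℤ_p`. Comparing the coefficients of `z^n` in
`S(z^p) = S^p R` shows that the `n`-th coefficient of `T(z^p) - T^p R` is exactly `p` times that
of `S`, whence `|S_n| ≤ 1`.
-/

open MvPowerSeries

/-- The substitution `z i ↦ z i ^ p` on multivariate power series. -/
noncomputable def dilate {d : ℕ} (p : ℕ) [Fact p.Prime] (S : MvPowerSeries (Fin d) ℚ_[p]) :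
    MvPowerSeries (Fin d) ℚ_[p] :=
  fun n => if ∀ i, p ∣ n i then
    MvPowerSeries.coeff (Finsupp.mapRange (· / p) (Nat.zero_div p) n) S else 0

theorem dilate_eq_expand {d : ℕ} (p : ℕ) [Fact p.Prime] (S : MvPowerSeries (Fin d) ℚ_[p]) :
    dilate p S = expand p (NeZero.ne p) S := by
  ext n
  by_cases hdvd : ∀ i, p ∣ n i
  · obtain ⟨m, rfl⟩ : ∃ m, p • m = n :=
      ⟨n.mapRange (· / p) (Nat.zero_div p), by ext i; simp [Nat.mul_div_cancel' (hdvd i)]⟩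
    have hm : Finsupp.mapRange (· / p) (Nat.zero_div p) (p • m) = m := by
      ext i; simp [Nat.mul_div_cancel_left _ (Fact.out : p.Prime).pos]
    rw [coeff_expand_smul]
    change ite _ _ _ = _
    rw [if_pos hdvd, hm]
  · push Not at hdvd
    obtain ⟨i, hi⟩ := hdvd
    rw [coeff_expand_of_not_dvd p _ S hi]
    exact if_neg (fun h => hi (h i))

namespace MvPowerSeries

variable {σ R : Type*}

theorem coeff_mul_eq_coeff_mul_constantCoeff [Semiring R] {U : MvPowerSeries σ R}
    {n : σ →₀ ℕ} (hU : ∀ m < n, coeff m U = 0) (V : MvPowerSeries σ R) :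
    coeff n (U * V) = coeff n U * constantCoeff V := by
  classical
  rw [coeff_mul, Finset.sum_eq_single (n, 0), coeff_zero_eq_constantCoeff_apply]
  · rintro ⟨a, b⟩ hab hne
    rw [Finset.HasAntidiagonal.mem_antidiagonal] at hab
    have ha : a < n := lt_of_le_of_ne (hab ▸ le_self_add) fun h => hne (by simp_all)
    rw [hU a ha, zero_mul]
  · simp

variable [CommRing R]

theorem coeff_expand_eq_zero_of_forall_lt {p : ℕ} (hp : 1 < p) {U : MvPowerSeries σ R}
    {n : σ →₀ ℕ} (hn : n ≠ 0) (hU : ∀ m < n, coeff m U = 0) :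
    coeff n (expand p (by omega) U) = 0 := by
  by_cases hdvd : ∀ i, p ∣ n i
  · obtain ⟨m, rfl⟩ : ∃ m, p • m = n :=
      ⟨n.mapRange (· / p) (Nat.zero_div p), by ext i; simp [Nat.mul_div_cancel' (hdvd i)]⟩
    have hm : m ≠ 0 := by rintro rfl; simp at hn
    rw [coeff_expand_smul]
    exact hU m (by simpa using nsmul_lt_nsmul_left (pos_iff_ne_zero.mpr hm) hp)
  · push Not at hdvd
    obtain ⟨i, hi⟩ := hdvd
    exact coeff_expand_of_not_dvd p _ U hi

theorem coeff_pow_mul_eq_of_forall_lt {S T : MvPowerSeries σ R} {n : σ →₀ ℕ}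
    (hST : ∀ m < n, coeff m (S - T) = 0) (hS0 : constantCoeff S = 1) (hT0 : constantCoeff T = 1)
    (k : ℕ) (V : MvPowerSeries σ R) :
    coeff n (S ^ k * V) = coeff n (T ^ k * V) + k * coeff n (S - T) * constantCoeff V := by
  set G := ∑ i ∈ Finset.range k, S ^ i * T ^ (k - 1 - i)
  have hG : constantCoeff G = k := by simp [G, map_sum, hS0, hT0]
  have := coeff_mul_eq_coeff_mul_constantCoeff hST (G * V)
  rw [← mul_assoc, mul_comm (S - T), geom_sum₂_mul, sub_mul, map_sub, map_mul constantCoeff, hG]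
    at this
  rw [← sub_eq_iff_eq_add', this]
  ring

theorem expand_zmod_eq_pow (p : ℕ) [Fact p.Prime] (f : MvPowerSeries σ (ZMod p)) :
    expand p (NeZero.ne p) f = f ^ p := by
  rw [← map_frobenius_expand, ZMod.frobenius_zmod, map_id, RingHom.id_apply]

end MvPowerSeries

namespace PadicInt

variable {p : ℕ} [Fact p.Prime] {σ : Type*}

theorem norm_le_inv_iff_toZMod_eq_zero (x : ℤ_[p]) : ‖x‖ ≤ (p : ℝ)⁻¹ ↔ toZMod x = 0 := by
  rw [← RingHom.mem_ker, ker_toZMod, IsLocalRing.mem_maximalIdeal, mem_nonunits]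
  simpa using (norm_lt_pow_iff_norm_le_pow_sub_one x 0).symm

theorem exists_map_coe_eq {S : MvPowerSeries σ ℚ_[p]} (hS : ∀ n, ‖coeff n S‖ ≤ 1) :
    ∃ g : MvPowerSeries σ ℤ_[p], map Coe.ringHom g = S :=
  ⟨fun n => ⟨coeff n S, hS n⟩, by ext n; rfl⟩

theorem constantCoeff_eq_one_of_map_coe {g : MvPowerSeries σ ℤ_[p]}
    (hg : constantCoeff (map Coe.ringHom g) = 1) : constantCoeff g = 1 := by
  rw [constantCoeff_map] at hg
  exact Subtype.ext hg

theorem norm_coeff_map_coe_le_inv_iff (F : MvPowerSeries σ ℤ_[p]) (n : σ →₀ ℕ) :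
    ‖coeff n (map Coe.ringHom F)‖ ≤ (p : ℝ)⁻¹ ↔ coeff n (map toZMod F) = 0 := by
  rw [coeff_map, coeff_map]
  exact norm_le_inv_iff_toZMod_eq_zero _

end PadicInt

section DieudonneDwork

open PadicInt

variable {p : ℕ} [Fact p.Prime] {σ : Type*}

theorem exists_expand_eq_pow_mul_of_norm_coeff_le_one {S : MvPowerSeries σ ℚ_[p]}
    (hS0 : constantCoeff S = 1) (hS : ∀ n, ‖coeff n S‖ ≤ 1) :
    ∃ R, expand p (NeZero.ne p) S = S ^ p * R ∧ constantCoeff R = 1 ∧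
      ∀ n ≠ 0, ‖coeff n R‖ ≤ (p : ℝ)⁻¹ := by
  classical
  obtain ⟨g, rfl⟩ := exists_map_coe_eq hS
  have hg0 := constantCoeff_eq_one_of_map_coe hS0
  set R := invOfUnit (g ^ p) 1 * expand p (NeZero.ne p) g
  have hR : g ^ p * R = expand p (NeZero.ne p) g := by
    rw [← mul_assoc, mul_invOfUnit _ _ (by simp [hg0]), one_mul]
  have hR0 : constantCoeff R = 1 := by simpa [hg0] using congr(constantCoeff $hR)
  have hRmod : map toZMod R = 1 := by
    have hu : IsUnit (map toZMod (g ^ p)) := isUnit_iff_constantCoeff.mpr (by simp [hg0])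
    apply hu.mul_left_cancel
    rw [← map_mul, hR, mul_one, map_expand, expand_zmod_eq_pow, map_pow]
  refine ⟨map Coe.ringHom R, ?_, by simp [hR0], fun n hn => ?_⟩
  · rw [← map_expand, ← hR, map_mul, map_pow]
  · rw [norm_coeff_map_coe_le_inv_iff, hRmod, coeff_one, if_neg hn]

theorem exists_map_coe_eq_and_map_toZMod_eq_one {R : MvPowerSeries σ ℚ_[p]}
    (hR0 : constantCoeff R = 1) (hR : ∀ n ≠ 0, ‖coeff n R‖ ≤ (p : ℝ)⁻¹) :
    ∃ R' : MvPowerSeries σ ℤ_[p], map Coe.ringHom R' = R ∧ map toZMod R' = 1 := by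
  classical
  have hR1 : ∀ n, ‖coeff n R‖ ≤ 1 := fun n => by
    rcases eq_or_ne n 0 with rfl | hn
    · simp [hR0]
    · exact (hR n hn).trans
        (inv_le_one_of_one_le₀ (by exact_mod_cast (Fact.out : p.Prime).one_le))
  obtain ⟨R', rfl⟩ := exists_map_coe_eq hR1
  refine ⟨R', rfl, ?_⟩
  ext n
  rcases eq_or_ne n 0 with rfl | hn
  · simp [constantCoeff_eq_one_of_map_coe hR0]
  · rw [coeff_one, if_neg hn, ← norm_coeff_map_coe_le_inv_iff]
    exact hR n hn

theorem norm_coeff_le_one_of_expand_eq_pow_mul {S R : MvPowerSeries σ ℚ_[p]}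
    (hS0 : constantCoeff S = 1) (hSR : expand p (NeZero.ne p) S = S ^ p * R)
    (hR0 : constantCoeff R = 1) (hR : ∀ n ≠ 0, ‖coeff n R‖ ≤ (p : ℝ)⁻¹) (n : σ →₀ ℕ) :
    ‖coeff n S‖ ≤ 1 := by
  classical
  obtain ⟨R', rfl, hR'⟩ := exists_map_coe_eq_and_map_toZMod_eq_one hR0 hR
  induction n using WellFoundedLT.induction with
  | _ n ih =>
  rcases eq_or_ne n 0 with rfl | hn
  · simp [hS0]
  set T : MvPowerSeries σ ℚ_[p] := (trunc ℚ_[p] n S : MvPowerSeries σ ℚ_[p])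
  have hcoeffT : ∀ m, coeff m T = if m < n then coeff m S else 0 := fun m => by
    simp only [T, MvPolynomial.coeff_coe, coeff_trunc]
  have hST : ∀ m < n, coeff m (S - T) = 0 := fun m hm => by
    rw [map_sub, hcoeffT, if_pos hm, sub_self]
  have hT0 : constantCoeff T = 1 := by
    rw [← coeff_zero_eq_constantCoeff_apply, hcoeffT, if_pos (pos_of_ne_zero hn),
      coeff_zero_eq_constantCoeff_apply, hS0]
  obtain ⟨T', hT'⟩ := exists_map_coe_eq (S := T) fun m => by
    rw [hcoeffT]
    split_ifs with h
    exacts [ih m h, by simp]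
  have hF : ‖coeff n (expand p (NeZero.ne p) T - T ^ p * map Coe.ringHom R')‖ ≤ (p : ℝ)⁻¹ := by
    rw [← hT', ← map_expand, ← map_pow, ← map_mul, ← map_sub, norm_coeff_map_coe_le_inv_iff,
      map_sub, map_mul, map_pow, map_expand, expand_zmod_eq_pow, hR', mul_one, sub_self,
      map_zero]
  have key : coeff n (expand p (NeZero.ne p) T - T ^ p * map Coe.ringHom R') = p * coeff n S := by
    have h1 := coeff_expand_eq_zero_of_forall_lt (Fact.out : p.Prime).one_lt hn hST
    have h2 := coeff_pow_mul_eq_of_forall_lt hST hS0 hT0 p (map Coe.ringHom R')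
    have h3 := congr(coeff n $hSR)
    rw [map_sub, map_sub] at h1
    rw [map_sub, hcoeffT, if_neg (lt_irrefl n), sub_zero, hR0] at h2
    rw [map_sub]
    linear_combination h3 + h2 - h1
  rw [key, norm_mul, Padic.norm_p] at hF
  have hp0 : (0 : ℝ) < (p : ℝ)⁻¹ := inv_pos.mpr (by exact_mod_cast (Fact.out : p.Prime).pos)
  exact le_of_mul_le_mul_left (by rwa [mul_one]) hp0

end DieudonneDwork

theorem stmt0_general (p : ℕ) [Fact p.Prime] (d : ℕ)
    (S : MvPowerSeries (Fin d) ℚ_[p])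
    (hS0 : MvPowerSeries.constantCoeff S = 1) :
    (∀ n, ‖MvPowerSeries.coeff n S‖ ≤ 1) ↔
      (∃ R : MvPowerSeries (Fin d) ℚ_[p],
        dilate p S = S ^ p * R ∧
        MvPowerSeries.constantCoeff R = 1 ∧
        ∀ n, n ≠ 0 → ‖MvPowerSeries.coeff n R‖ ≤ (p : ℝ)⁻¹) := by
  rw [dilate_eq_expand]
  exact ⟨exists_expand_eq_pow_mul_of_norm_coeff_le_one hS0,
    fun ⟨_, hSR, hR0, hR⟩ => norm_coeff_le_one_of_expand_eq_pow_mul hS0 hSR hR0 hR⟩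

/-- Multivariate Dieudonné–Dwork lemma: for `S` with constant term `1` and coefficients in
`ℚ_p`, `S` has all coefficients in `ℤ_p` iff `S(z^p)/S(z)^p ∈ 1 + p·∑ᵢ zᵢ·ℤ_p[[z]]`. -/
theorem stmt0 (p : ℕ) [Fact p.Prime] (d : ℕ) (hd : 0 < d)
    (S : MvPowerSeries (Fin d) ℚ_[p])
    (hS0 : MvPowerSeries.constantCoeff S = 1) :
    (∀ n, ‖MvPowerSeries.coeff n S‖ ≤ 1) ↔
      (∃ R : MvPowerSeries (Fin d) ℚ_[p],
        dilate p S = S ^ p * R ∧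
        MvPowerSeries.constantCoeff R = 1 ∧
        ∀ n, n ≠ 0 → ‖MvPowerSeries.coeff n R‖ ≤ (p : ℝ)⁻¹) :=
  stmt0_general p d S hS0
end

section
/- Let p be a prime and J a positive integer. Then p·H_{J} ≡ H_{⌊J/p⌋} modulo p·Z_p, where H_m = ∑_{j=1}^m 1/j is the m-th harmonic number (H_0 = 0). -/
/-- The `m`-th harmonic number `H_m = ∑_{j=1}^m 1/j`, with `H_0 = 0`. -/
def harmonic' (m : ℕ) : ℚ := ∑ j ∈ Finset.range m, (1 : ℚ) / (j + 1)

/-!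
The multiples `p k ≤ J` contribute `∑_{k ≤ J/p} 1/(p k) = H_{J/p}/p` to `H_J`, so
`p H_J - H_{J/p} = ∑_{j ≤ J, p ∤ j} p/j`, a sum of terms of `p`-adic norm `1/p`.
-/

open Finset

lemma harmonic'_eq_harmonic (m : ℕ) : harmonic' m = harmonic m := by
  simp [harmonic', harmonic]

lemma Nat.Icc_filter_dvd_eq_image {p : ℕ} (hp : 0 < p) (n : ℕ) :
    {x ∈ Icc 1 n | p ∣ x} = (Icc 1 (n / p)).image (p * ·) := by
  ext x
  simp only [mem_filter, mem_Icc, mem_image, Nat.le_div_iff_mul_le hp]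
  constructor
  · rintro ⟨⟨hx1, hxn⟩, k, rfl⟩
    exact ⟨k, ⟨Nat.pos_of_mul_pos_left hx1, by rwa [mul_comm]⟩, rfl⟩
  · rintro ⟨k, ⟨hk1, hkn⟩, rfl⟩
    exact ⟨⟨Nat.mul_pos hp hk1, by rwa [mul_comm]⟩, dvd_mul_right p k⟩

lemma Nat.sum_Icc_filter_dvd {M : Type*} [AddCommMonoid M] (f : ℕ → M) (p n : ℕ) :
    ∑ x ∈ Icc 1 n with p ∣ x, f x = ∑ k ∈ Icc 1 (n / p), f (p * k) := by
  rcases p.eq_zero_or_pos with rfl | hp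
  · refine (sum_eq_zero fun x hx ↦ ?_).trans (by simp)
    simp only [mem_filter, mem_Icc, zero_dvd_iff] at hx
    omega
  rw [Nat.Icc_filter_dvd_eq_image hp, sum_image fun _ _ _ _ ↦ (Nat.mul_left_cancel hp ·)]

lemma mul_harmonic_sub_harmonic_div (p n : ℕ) :
    p * harmonic n - harmonic (n / p) = ∑ x ∈ Icc 1 n with ¬p ∣ x, (p : ℚ) / x := by
  rcases p.eq_zero_or_pos with rfl | hp
  · simp
  have hsplit := sum_filter_add_sum_filter_not (Icc 1 n) (p ∣ ·) fun x ↦ (p : ℚ) / x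
  have hmultiples : ∑ x ∈ Icc 1 n with p ∣ x, (p : ℚ) / x = harmonic (n / p) := by
    rw [Nat.sum_Icc_filter_dvd, harmonic_eq_sum_Icc]
    refine sum_congr rfl fun k _ ↦ ?_
    rw [Nat.cast_mul, div_mul_cancel_left₀ (by exact_mod_cast hp.ne')]
  have hall : p * harmonic n = ∑ x ∈ Icc 1 n, (p : ℚ) / x := by
    simp only [harmonic_eq_sum_Icc, mul_sum, div_eq_mul_inv]
  linear_combination hall - hsplit + hmultiples

lemma Padic.norm_p_div_natCast_of_not_dvd {p : ℕ} [Fact p.Prime] {x : ℕ} (hx : ¬p ∣ x) :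
    ‖(p : ℚ_[p]) / x‖ = (p : ℝ)⁻¹ := by
  have hunit : ‖(x : ℚ_[p])‖ = 1 :=
    Padic.norm_natCast_eq_one_iff.mpr ((Nat.Prime.coprime_iff_not_dvd Fact.out).mpr hx)
  rw [norm_div, hunit, div_one, Padic.norm_p]

theorem stmt3_general (p : ℕ) [Fact p.Prime] (J : ℕ) :
    ‖(p : ℚ_[p]) * ((harmonic' J : ℚ) : ℚ_[p]) - ((harmonic' (J / p) : ℚ) : ℚ_[p])‖
      ≤ (p : ℝ)⁻¹ := by
  have hsum := congrArg (fun q : ℚ ↦ (q : ℚ_[p])) (mul_harmonic_sub_harmonic_div p J)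
  push_cast at hsum
  rw [harmonic'_eq_harmonic, harmonic'_eq_harmonic, hsum]
  refine IsUltrametricDist.norm_sum_le_of_forall_le_of_nonneg (by positivity) fun x hx ↦ ?_
  exact (Padic.norm_p_div_natCast_of_not_dvd (mem_filter.mp hx).2).le

/-- For a prime `p` and `J ≥ 1`, `p·H_J ≡ H_{⌊J/p⌋} (mod p ℤ_p)`. -/
theorem stmt3 (p : ℕ) [Fact p.Prime] (J : ℕ) (hJ : 1 ≤ J) :
    ‖(p : ℚ_[p]) * ((harmonic' J : ℚ) : ℚ_[p]) - ((harmonic' (J / p) : ℚ) : ℚ_[p])‖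
      ≤ (p : ℝ)⁻¹ :=
  stmt3_general p J
end

section
/- Let p be a prime, d ≥ 1, and N = (N_1,...,N_d), L = (L_1,...,L_d), a = (a_1,...,a_d), k = (k_1,...,k_d) integer vectors with 0 ≤ L_i ≤ N_i, 0 ≤ a_i < p, and k_i ≥ 0 for all i. Define B(N, m) = (∑_i N_i m_i)! / ∏_i (m_i!)^{N_i}. Then B(N, a + p·k) · ( H_{⌊(L·a)/p⌋ + L·k} − H_{L·k} ) lies in p·Z_p, where L·a = ∑_i L_i a_i, L·k = ∑_i L_i k_i, and H_m denotes the m-th harmonic number with H_0 = 0. -/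
/-- `B(N, m) = (∑ᵢ Nᵢ mᵢ)! / ∏ᵢ (mᵢ!)^{Nᵢ}`. -/
def Bfun {d : ℕ} (N m : Fin d → ℕ) : ℚ :=
  ((∑ i, N i * m i).factorial : ℚ) / ∏ i, ((m i).factorial : ℚ) ^ (N i)

open Finset

namespace Nat

variable {ι : Type*}

theorem sum_div_le_sum_div (s : Finset ι) (f : ι → ℕ) (n : ℕ) :
    ∑ i ∈ s, f i / n ≤ (∑ i ∈ s, f i) / n := by
  classical
  induction s using Finset.induction_on with
  | empty => simp
  | insert i s hi ih =>
    rw [sum_insert hi, sum_insert hi]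
    exact (Nat.add_le_add_left ih _).trans Nat.div_add_div_le_add_div

theorem sum_mul_div_le_sum_mul_div (s : Finset ι) (c x : ι → ℕ) (n : ℕ) :
    ∑ i ∈ s, c i * (x i / n) ≤ (∑ i ∈ s, c i * x i) / n :=
  (sum_le_sum fun _ _ => Nat.mul_div_le_mul_div_assoc _ _ _).trans (sum_div_le_sum_div _ _ _)

theorem sum_mul_div_lt_of_le [Fintype ι] {c N : ι → ℕ} (hcN : ∀ i, c i ≤ N i) (x : ι → ℕ)
    {n : ℕ} (h : ∑ i, c i * (x i / n) < (∑ i, c i * x i) / n) :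
    ∑ i, N i * (x i / n) < (∑ i, N i * x i) / n := by
  have hsplit : ∀ y : ι → ℕ, ∑ i, N i * y i = ∑ i, (N i - c i) * y i + ∑ i, c i * y i := by
    intro y
    rw [← sum_add_distrib]
    exact sum_congr rfl fun i _ => by rw [← add_mul, Nat.sub_add_cancel (hcN i)]
  calc ∑ i, N i * (x i / n)
      = ∑ i, (N i - c i) * (x i / n) + ∑ i, c i * (x i / n) := hsplit _
    _ < (∑ i, (N i - c i) * x i) / n + (∑ i, c i * x i) / n :=
      Nat.add_lt_add_of_le_of_lt (sum_mul_div_le_sum_mul_div _ _ _ _) h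
    _ ≤ (∑ i, N i * x i) / n := by rw [hsplit]; exact Nat.div_add_div_le_add_div

end Nat

section Legendre

variable {p : ℕ} [hp : Fact p.Prime] {ι : Type*}

theorem padicValNat_finset_prod {s : Finset ι} {f : ι → ℕ} (hf : ∀ i ∈ s, f i ≠ 0) :
    padicValNat p (∏ i ∈ s, f i) = ∑ i ∈ s, padicValNat p (f i) := by
  simp_rw [← Nat.factorization_def _ hp.out]
  rw [Nat.factorization_prod hf, Finset.sum_apply']

/-- Legendre's formula, compared level by level. -/
theorem sum_mul_padicValNat_factorial_add_card_le [Fintype ι] (c x : ι → ℕ) (levels : Finset ℕ)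
    (hpos : ∀ ℓ ∈ levels, 0 < ℓ)
    (hcarry : ∀ ℓ ∈ levels, ∑ i, c i * (x i / p ^ ℓ) < (∑ i, c i * x i) / p ^ ℓ) :
    ∑ i, c i * padicValNat p (x i).factorial + #levels
      ≤ padicValNat p (∑ i, c i * x i).factorial := by
  set T := ∑ i, c i * x i
  set b := Nat.log p T + 1
  have hT : Nat.log p T < b := Nat.lt_succ_self _
  have hx : ∀ i, c i * padicValNat p (x i).factorial = ∑ ℓ ∈ Ico 1 b, c i * (x i / p ^ ℓ) := by
    intro i
    rcases Nat.eq_zero_or_pos (c i) with hc | hc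
    · simp [hc]
    have hxT : x i ≤ T :=
      (Nat.le_mul_of_pos_left _ hc).trans (single_le_sum (fun j _ => Nat.zero_le (c j * x j))
        (mem_univ i))
    rw [padicValNat_factorial ((Nat.log_mono_right hxT).trans_lt hT), mul_sum]
  have hsub : levels ⊆ Ico 1 b := by
    intro ℓ hℓ
    have hle : p ^ ℓ ≤ T := by
      by_contra! hlt
      simpa [Nat.div_eq_of_lt hlt] using hcarry ℓ hℓ
    have := Nat.le_log_of_pow_le hp.out.one_lt hle
    exact mem_Ico.mpr ⟨hpos ℓ hℓ, by omega⟩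
  classical
  rw [sum_congr rfl fun i _ => hx i, sum_comm, padicValNat_factorial hT,
    card_eq_sum_ones, ← inter_eq_right.mpr hsub, ← sum_ite_mem, ← sum_add_distrib]
  refine sum_le_sum fun ℓ _ => ?_
  split_ifs with hℓ
  · exact hcarry ℓ hℓ
  · exact (Nat.sum_mul_div_le_sum_mul_div _ _ _ _)

end Legendre

section Carries

variable {p : ℕ} [hp : Fact p.Prime] {ι : Type*} [Fintype ι]

/-- The carry at level `r + 1` comes from `⌊L·k / p^r⌋ < ⌊n / p^r⌋`, as `p^r ∣ n` and `L·k < n`. -/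
theorem sum_mul_div_pow_lt_of_dvd (L a k : ι → ℕ) (ha : ∀ i, a i < p) {n r : ℕ}
    (hrn : p ^ r ∣ n) (hn : ∑ i, L i * k i < n)
    (hn' : n ≤ (∑ i, L i * a i) / p + ∑ i, L i * k i) :
    ∑ i, L i * ((a i + p * k i) / p ^ (r + 1))
      < (∑ i, L i * (a i + p * k i)) / p ^ (r + 1) := by
  have hp0 := hp.out.pos
  have hdigit : ∀ i, (a i + p * k i) / p ^ (r + 1) = k i / p ^ r := fun i => by
    rw [pow_succ', ← Nat.div_div_eq_div_mul, Nat.add_mul_div_left _ _ hp0,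
      Nat.div_eq_of_lt (ha i), zero_add]
  have hsum : (∑ i, L i * (a i + p * k i)) / p = (∑ i, L i * a i) / p + ∑ i, L i * k i := by
    simp_rw [mul_add, sum_add_distrib, mul_left_comm _ p, ← mul_sum]
    exact Nat.add_mul_div_left _ _ hp0
  calc ∑ i, L i * ((a i + p * k i) / p ^ (r + 1))
      = ∑ i, L i * (k i / p ^ r) := by simp_rw [hdigit]
    _ ≤ (∑ i, L i * k i) / p ^ r := Nat.sum_mul_div_le_sum_mul_div _ _ _ _
    _ < n / p ^ r := Nat.div_lt_div_of_lt_of_dvd hrn hn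
    _ ≤ ((∑ i, L i * a i) / p + ∑ i, L i * k i) / p ^ r := Nat.div_le_div_right hn'
    _ = (∑ i, L i * (a i + p * k i)) / p ^ (r + 1) := by
      rw [← hsum, Nat.div_div_eq_div_mul, pow_succ']

theorem sum_mul_padicValNat_factorial_add_lt {N L : ι → ℕ} (hL : ∀ i, L i ≤ N i)
    (a k : ι → ℕ) (ha : ∀ i, a i < p) {n : ℕ} (hn : ∑ i, L i * k i < n)
    (hn' : n ≤ (∑ i, L i * a i) / p + ∑ i, L i * k i) :
    ∑ i, N i * padicValNat p (a i + p * k i).factorial + padicValNat p n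
      < padicValNat p (∑ i, N i * (a i + p * k i)).factorial := by
  have := sum_mul_padicValNat_factorial_add_card_le N (fun i => a i + p * k i)
    (Icc 1 (padicValNat p n + 1)) (fun ℓ hℓ => (mem_Icc.mp hℓ).1) fun ℓ hℓ => by
      obtain ⟨hℓ1, hℓv⟩ := mem_Icc.mp hℓ
      obtain ⟨r, rfl⟩ := Nat.exists_eq_add_of_le' hℓ1
      have hrn : p ^ r ∣ n := (pow_dvd_pow p (by omega)).trans pow_padicValNat_dvd
      exact Nat.sum_mul_div_lt_of_le hL _ (sum_mul_div_pow_lt_of_dvd L a k ha hrn hn hn')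
  simp only [Nat.card_Icc] at this
  omega

end Carries

theorem Padic.norm_natCast_div_le_inv {p : ℕ} [hp : Fact p.Prime] {x y : ℕ} (hx : x ≠ 0)
    (hy : y ≠ 0) (h : padicValNat p y < padicValNat p x) :
    ‖(((x / y : ℚ)) : ℚ_[p])‖ ≤ (p : ℝ)⁻¹ := by
  have hxy : (x / y : ℚ) ≠ 0 := by positivity
  rw [Padic.norm_eq_zpow_neg_valuation (by exact_mod_cast hxy), Padic.valuation_ratCast,
    padicValRat.div (by positivity) (by positivity), padicValRat.of_nat, padicValRat.of_nat,
    ← zpow_neg_one]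
  exact zpow_le_zpow_right₀ (by exact_mod_cast hp.out.one_le) (by omega)

theorem norm_Bfun_div_le {p : ℕ} [Fact p.Prime] {d : ℕ} {N L : Fin d → ℕ}
    (hL : ∀ i, L i ≤ N i) (a k : Fin d → ℕ) (ha : ∀ i, a i < p) {n : ℕ}
    (hn : ∑ i, L i * k i < n) (hn' : n ≤ (∑ i, L i * a i) / p + ∑ i, L i * k i) :
    ‖((Bfun N (fun i => a i + p * k i) / n : ℚ) : ℚ_[p])‖ ≤ (p : ℝ)⁻¹ := by
  set m : Fin d → ℕ := fun i => a i + p * k i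
  have hD : ∀ i ∈ univ, (m i).factorial ^ N i ≠ 0 := fun i _ => by positivity
  have hn0 : n ≠ 0 := by omega
  have hB : Bfun N m / n
      = ((∑ i, N i * m i).factorial : ℕ) / (((∏ i, (m i).factorial ^ N i) * n : ℕ) : ℚ) := by
    simp [Bfun, div_div]
  rw [hB]
  refine Padic.norm_natCast_div_le_inv (by positivity) (by positivity) ?_
  rw [padicValNat.mul (prod_ne_zero_iff.mpr hD) hn0, padicValNat_finset_prod hD]
  simp_rw [padicValNat.pow]
  exact sum_mul_padicValNat_factorial_add_lt hL a k ha hn hn'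

theorem stmt4_general (p : ℕ) [Fact p.Prime] (d : ℕ)
    (N L a k : Fin d → ℕ) (hL : ∀ i, L i ≤ N i) (ha : ∀ i, a i < p) :
    ‖((Bfun N (fun i => a i + p * k i) *
        (harmonic' ((∑ i, L i * a i) / p + ∑ i, L i * k i) -
          harmonic' (∑ i, L i * k i)) : ℚ) : ℚ_[p])‖ ≤ (p : ℝ)⁻¹ := by
  set S := ∑ i, L i * k i
  have hH : harmonic' ((∑ i, L i * a i) / p + S) - harmonic' S
      = ∑ j ∈ Ico S ((∑ i, L i * a i) / p + S), 1 / ((j + 1 : ℕ) : ℚ) := by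
    rw [harmonic', harmonic', sum_Ico_eq_sub _ (Nat.le_add_left _ _)]
    push_cast
    rfl
  rw [hH, mul_sum, Rat.cast_sum]
  refine IsUltrametricDist.norm_sum_le_of_forall_le_of_nonneg (by positivity) fun j hj => ?_
  rw [← div_eq_mul_one_div]
  exact norm_Bfun_div_le hL a k ha (by simp at hj; omega) (by simp at hj; omega)

/-- For `0 ≤ L ≤ N`, `0 ≤ aᵢ < p`, `k ≥ 0`:
`B(N, a + p k)·(H_{⌊L·a/p⌋ + L·k} − H_{L·k}) ∈ p ℤ_p`. -/
theorem stmt4 (p : ℕ) [Fact p.Prime] (d : ℕ) (hd : 0 < d)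
    (N L a k : Fin d → ℕ) (hL : ∀ i, L i ≤ N i) (ha : ∀ i, a i < p) :
    ‖((Bfun N (fun i => a i + p * k i) *
        (harmonic' ((∑ i, L i * a i) / p + ∑ i, L i * k i) -
          harmonic' (∑ i, L i * k i)) : ℚ) : ℚ_[p])‖ ≤ (p : ℝ)⁻¹ :=
  stmt4_general p d N L a k hL ha
end

section
/- Let p be a prime, d ≥ 1, and N, L, a, k ∈ Z^d with 0 ≤ L ≤ N componentwise, 0 ≤ a_i < p, k_i ≥ 0. For every integer ε with 1 ≤ ε ≤ ⌊(L·a)/p⌋, the p-adic valuation of B(N, a + p·k) is at least 1 + v_p(L·k + ε), where B(N, m) = (∑_i N_i m_i)!/∏_i (m_i!)^{N_i} and L·k = ∑_i L_i k_i. -/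
/-!
By Legendre's formula, `v_p(B(N, m))` is the sum over `j ≥ 1` of the "carries"
`⌊(∑ Nᵢ mᵢ)/pʲ⌋ - ∑ Nᵢ ⌊mᵢ/pʲ⌋`, each of which is nonnegative. For `m = a + p k` and
`j = t + 1` with `pᵗ ∣ L·k + ε`, the carry at `pʲ` is positive: writing `kᵢ = pᵗ qᵢ + rᵢ`,
divisibility forces `L·r + ε ≥ pᵗ`, and `p ε ≤ L·a` turns this into
`N·a + p (N·r) ≥ pʲ`. This happens for the `v_p(L·k + ε) + 1` values `j = 1, …, v_p(L·k + ε) + 1`.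
-/

open Finset

theorem padicValRat_finset_prod (p : ℕ) [Fact p.Prime] {ι : Type*} (s : Finset ι) (f : ι → ℚ)
    (hf : ∀ i ∈ s, f i ≠ 0) :
    padicValRat p (∏ i ∈ s, f i) = ∑ i ∈ s, padicValRat p (f i) := by
  classical
  induction s using Finset.induction with
  | empty => simp
  | @insert x s hx ih =>
    rw [prod_insert hx, sum_insert hx,
      padicValRat.mul (hf x (mem_insert_self x s))
        (prod_ne_zero_iff.mpr fun i hi => hf i (mem_insert_of_mem hi)),
      ih fun i hi => hf i (mem_insert_of_mem hi)]

section CarrySums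

variable {ι : Type*} [Fintype ι]

theorem sum_mul_div_le_div_sum (N m : ι → ℕ) (q : ℕ) :
    ∑ i, N i * (m i / q) ≤ (∑ i, N i * m i) / q := by
  rcases Nat.eq_zero_or_pos q with rfl | hq
  · simp
  rw [Nat.le_div_iff_mul_le hq, sum_mul]
  exact sum_le_sum fun i _ => by
    rw [mul_assoc]
    exact Nat.mul_le_mul_left _ (Nat.div_mul_le_self _ _)

theorem le_sum_mul_mod_add_of_dvd {q ε : ℕ} (L k : ι → ℕ) (hε : 0 < ε)
    (hq : q ∣ ∑ i, L i * k i + ε) :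
    q ≤ ∑ i, L i * (k i % q) + ε := by
  refine Nat.le_of_dvd (by omega) ?_
  rw [← ZMod.natCast_eq_zero_iff] at hq ⊢
  push_cast at hq ⊢
  simpa only [ZMod.natCast_mod] using hq

theorem one_add_sum_mul_div_le_div_sum {p q ε : ℕ} (hp : 0 < p) (N L a k : ι → ℕ)
    (hL : ∀ i, L i ≤ N i) (ha : ∀ i, a i < p) (hε : 0 < ε) (hεa : ε ≤ (∑ i, L i * a i) / p)
    (hq : q ∣ ∑ i, L i * k i + ε) :
    1 + ∑ i, N i * ((a i + p * k i) / (p * q)) ≤ (∑ i, N i * (a i + p * k i)) / (p * q) := by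
  have hq0 : 0 < q := Nat.pos_of_dvd_of_pos hq (by omega)
  have hdiv (i : ι) : (a i + p * k i) / (p * q) = k i / q := by
    rw [← Nat.div_div_eq_div_mul, Nat.add_mul_div_left _ _ hp, Nat.div_eq_of_lt (ha i), zero_add]
  have hsplit (i : ι) :
      N i * (a i + p * k i) = N i * a i + p * (N i * (k i % q)) + p * q * (N i * (k i / q)) := by
    conv_lhs => rw [← Nat.div_add_mod (k i) q]
    ring
  have hLN (f : ι → ℕ) : ∑ i, L i * f i ≤ ∑ i, N i * f i :=
    sum_le_sum fun i _ => Nat.mul_le_mul_right _ (hL i)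
  have hcarry : p * q ≤ ∑ i, N i * a i + p * ∑ i, N i * (k i % q) :=
    calc p * q ≤ p * (∑ i, L i * (k i % q) + ε) :=
          Nat.mul_le_mul_left p (le_sum_mul_mod_add_of_dvd L k hε hq)
      _ = ε * p + p * ∑ i, L i * (k i % q) := by ring
      _ ≤ ∑ i, N i * a i + p * ∑ i, N i * (k i % q) :=
          add_le_add (((Nat.le_div_iff_mul_le hp).mp hεa).trans (hLN a))
            (Nat.mul_le_mul_left p (hLN _))
  rw [Nat.le_div_iff_mul_le (by positivity)]
  simp only [hdiv, hsplit, sum_add_distrib, ← mul_sum]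
  linarith

end CarrySums

theorem padicValRat_Bfun (p : ℕ) [Fact p.Prime] {d : ℕ} (N m : Fin d → ℕ) {b : ℕ}
    (hS : Nat.log p (∑ i, N i * m i) < b) (hm : ∀ i, Nat.log p (m i) < b) :
    padicValRat p (Bfun N m) = ∑ j ∈ Ico 1 b,
      (((∑ i, N i * m i) / p ^ j : ℕ) - (∑ i, N i * (m i / p ^ j) : ℕ) : ℤ) := by
  have hfac (i : Fin d) : ((m i).factorial : ℚ) ^ N i ≠ 0 := by positivity
  have hnum : ((∑ i, N i * m i).factorial : ℚ) ≠ 0 := by positivity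
  have hden : (∏ i, ((m i).factorial : ℚ) ^ N i) ≠ 0 := prod_ne_zero_iff.mpr fun i _ => hfac i
  have hval (i : Fin d) : padicValRat p (((m i).factorial : ℚ) ^ N i)
      = N i * ((∑ j ∈ Ico 1 b, m i / p ^ j : ℕ) : ℤ) := by
    rw [padicValRat.pow, padicValRat.of_nat, padicValNat_factorial (hm i)]
  rw [Bfun, padicValRat.div hnum hden, padicValRat_finset_prod p _ _ fun i _ => hfac i,
    padicValRat.of_nat, padicValNat_factorial hS]
  simp only [hval]
  push_cast
  rw [sum_sub_distrib]
  congr 1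
  simp only [mul_sum]
  exact sum_comm

theorem stmt6_general (p : ℕ) [Fact p.Prime] (d : ℕ)
    (N L a k : Fin d → ℕ) (hL : ∀ i, L i ≤ N i) (ha : ∀ i, a i < p)
    (ε : ℕ) (hε1 : 1 ≤ ε) (hε2 : ε ≤ (∑ i, L i * a i) / p) :
    (1 + (padicValNat p ((∑ i, L i * k i) + ε) : ℤ)) ≤
      padicValRat p (Bfun N (fun i => a i + p * k i)) := by
  have hp := (Fact.out : p.Prime).pos
  set m : Fin d → ℕ := fun i => a i + p * k i
  set v := padicValNat p (∑ i, L i * k i + ε)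
  set b := ∑ i, N i * m i + ∑ i, m i + v + 2
  have hm (i : Fin d) : m i < b :=
    (single_le_sum (fun i _ => Nat.zero_le (m i)) (mem_univ i)).trans_lt (by omega)
  rw [padicValRat_Bfun p N m (b := b) ((Nat.log_le_self _ _).trans_lt (by omega))
    fun i => (Nat.log_le_self _ _).trans_lt (hm i)]
  calc (1 + v : ℤ) = ∑ j ∈ Ico 1 (v + 2), 1 := by simp; omega
    _ ≤ ∑ j ∈ Ico 1 (v + 2),
        (((∑ i, N i * m i) / p ^ j : ℕ) - (∑ i, N i * (m i / p ^ j) : ℕ) : ℤ) := by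
      refine sum_le_sum fun j hj => ?_
      obtain ⟨hj1, hj2⟩ := mem_Ico.mp hj
      obtain ⟨t, rfl⟩ : ∃ t, j = t + 1 := ⟨j - 1, by omega⟩
      have hdvd : p ^ t ∣ ∑ i, L i * k i + ε :=
        (pow_dvd_pow p (by omega)).trans pow_padicValNat_dvd
      have hcarry := one_add_sum_mul_div_le_div_sum hp N L a k hL ha hε1 hε2 hdvd
      rw [← pow_succ'] at hcarry
      change 1 + ∑ i, N i * (m i / p ^ (t + 1)) ≤ (∑ i, N i * m i) / p ^ (t + 1) at hcarry
      omega
    _ ≤ _ := sum_le_sum_of_subset_of_nonneg (Ico_subset_Ico_right (by omega))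
      fun j _ _ => sub_nonneg.mpr (by exact_mod_cast sum_mul_div_le_div_sum N m _)

/-- Key valuation estimate: for `0 ≤ L ≤ N`, `0 ≤ aᵢ < p`, `k ≥ 0`, and every
`1 ≤ ε ≤ ⌊L·a/p⌋`, we have `v_p(B(N, a + p k)) ≥ 1 + v_p(L·k + ε)`. -/
theorem stmt6 (p : ℕ) [Fact p.Prime] (d : ℕ) (hd : 0 < d)
    (N L a k : Fin d → ℕ) (hL : ∀ i, L i ≤ N i) (ha : ∀ i, a i < p)
    (ε : ℕ) (hε1 : 1 ≤ ε) (hε2 : ε ≤ (∑ i, L i * a i) / p) :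
    (1 + (padicValNat p ((∑ i, L i * k i) + ε) : ℤ)) ≤
      padicValRat p (Bfun N (fun i => a i + p * k i)) :=
  stmt6_general p d N L a k hL ha ε hε1 hε2
end

section
/- Let p be a prime, r ≥ 0 an integer, d ≥ 1, R a commutative ring, and Z, W : Z_{≥0}^d → R functions. For s ≥ 0 and m ∈ Z_{≥0}^d define W̄_s(m) = ∑_{p^s m ≤ k ≤ p^s(m+1)−1} W(k), the sum over all k with p^s m_i ≤ k_i ≤ p^s(m_i+1)−1 for each i. Then ∑_{0 ≤ k ≤ (p^r−1)·1} Z(k)W(k) = Z(0)·W̄_r(0) + ∑_{s=0}^{r−1} ∑_{0 ≤ m ≤ (p^{r−s}−1)·1} ( Z(m_1 p^s,...,m_d p^s) − Z(⌊m_1/p⌋p^{s+1},...,⌊m_d/p⌋p^{s+1}) ) · W̄_s(m). -/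
/-!
Write `F s = ∑_{0 ≤ m ≤ (p^{r-s}-1)·1} Z(p^s m) W̄_s(m)`. Then `F 0` is the left-hand side and
`F r = Z(0) W̄_r(0)`. Since the `p^s`-blocks inside a `p^{s+1}`-block `m'` are exactly those `m`
with `⌊m/p⌋ = m'`, summing `Z(⌊m/p⌋ p^{s+1}) W̄_s(m)` over `m` gives `F (s+1)`, so the `s`-th
summand on the right is `F s - F (s+1)` and the right-hand side telescopes.
-/

open Finset

namespace Dwork

variable {d : ℕ}

theorem le_div_and_div_le_iff {q a b k : ℕ} (hq : 0 < q) :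
    a ≤ k / q ∧ k / q ≤ b ↔ q * a ≤ k ∧ k ≤ q * (b + 1) - 1 := by
  rw [Nat.le_div_iff_mul_le hq, Nat.div_le_iff_le_mul_add_pred hq, mul_comm a, Nat.mul_add_one]
  omega

def block (q : ℕ) (m : Fin d → ℕ) : Finset (Fin d → ℕ) :=
  Icc (fun i => q * m i) (fun i => q * (m i + 1) - 1)

theorem mem_block_iff {q : ℕ} (hq : 0 < q) {m k : Fin d → ℕ} :
    k ∈ block q m ↔ (fun i => k i / q) = m := by
  simp only [block, mem_Icc, Pi.le_def, ← forall_and, funext_iff]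
  refine forall_congr' fun i => ?_
  rw [← le_div_and_div_le_iff hq, and_comm, le_antisymm_iff]

theorem block_one (m : Fin d → ℕ) : block 1 m = {m} := by
  simp [block]

theorem mem_Icc_mul_iff {q : ℕ} (hq : 0 < q) {a b k : Fin d → ℕ} :
    k ∈ Icc (fun i => q * a i) (fun i => q * (b i + 1) - 1) ↔
      (fun i => k i / q) ∈ Icc a b := by
  simp only [mem_Icc, Pi.le_def, ← forall_and, le_div_and_div_le_iff hq]

theorem sum_Icc_mul_eq_sum_sum_block {M : Type*} [AddCommMonoid M] {q : ℕ} (hq : 0 < q)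
    (a b : Fin d → ℕ) (f : (Fin d → ℕ) → M) :
    ∑ k ∈ Icc (fun i => q * a i) (fun i => q * (b i + 1) - 1), f k =
      ∑ m ∈ Icc a b, ∑ k ∈ block q m, f k := by
  rw [← sum_fiberwise_of_maps_to (fun k => (mem_Icc_mul_iff hq).1)]
  refine sum_congr rfl fun m hm => sum_congr (ext fun k => ?_) fun _ _ => rfl
  rw [mem_filter, mem_Icc_mul_iff hq, mem_block_iff hq]
  constructor
  · exact And.right
  · rintro rfl
    exact ⟨hm, rfl⟩

theorem sum_block_sum_block {M : Type*} [AddCommMonoid M] {p q : ℕ} (hp : 0 < p) (hq : 0 < q)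
    (m : Fin d → ℕ) (f : (Fin d → ℕ) → M) :
    ∑ n ∈ block p m, ∑ k ∈ block q n, f k = ∑ k ∈ block (q * p) m, f k := by
  rw [block, ← sum_Icc_mul_eq_sum_sum_block hq, block]
  congr 2 with i
  · exact (mul_assoc q p (m i)).symm
  · rw [Nat.sub_add_cancel (Nat.mul_pos hp (Nat.succ_pos _)), mul_assoc]

section LevelSum

variable {R : Type*} [NonUnitalNonAssocSemiring R] (p r : ℕ) (Z W : (Fin d → ℕ) → R)

def levelSum (s : ℕ) : R :=
  ∑ m ∈ Icc 0 (fun _ => p ^ (r - s) - 1), Z (fun i => m i * p ^ s) * ∑ k ∈ block (p ^ s) m, W k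

theorem levelSum_zero :
    levelSum p r Z W 0 = ∑ k ∈ Icc 0 (fun _ => p ^ r - 1), Z k * W k := by
  simp [levelSum, block_one]

theorem levelSum_self : levelSum p r Z W r = Z 0 * ∑ k ∈ block (p ^ r) 0, W k := by
  simp [levelSum, show (fun _ : Fin d => 0) = 0 from rfl]

theorem sum_div_mul_block_eq_levelSum_succ (hp : 0 < p) {s : ℕ} (hs : s < r) :
    ∑ m ∈ Icc 0 (fun _ => p ^ (r - s) - 1),
        Z (fun i => m i / p * p ^ (s + 1)) * ∑ k ∈ block (p ^ s) m, W k =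
      levelSum p r Z W (s + 1) := by
  have hbox : Icc (0 : Fin d → ℕ) (fun _ => p ^ (r - s) - 1) =
      Icc (fun i => p * (0 : Fin d → ℕ) i) (fun i => p * ((p ^ (r - (s + 1)) - 1) + 1) - 1) := by
    rw [Nat.sub_add_cancel (Nat.one_le_pow _ _ hp), ← pow_succ', Nat.sub_add_eq,
      Nat.sub_add_cancel (Nat.sub_pos_of_lt hs)]
    rfl
  rw [hbox, sum_Icc_mul_eq_sum_sum_block hp, levelSum]
  refine sum_congr rfl fun m _ => ?_
  have hZ : ∀ n ∈ block p m, Z (fun i => n i / p * p ^ (s + 1)) = Z (fun i => m i * p ^ (s + 1)) :=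
    fun n hn => by rw [← (mem_block_iff hp).1 hn]
  rw [sum_congr rfl fun n hn => by rw [hZ n hn], ← mul_sum,
    sum_block_sum_block hp (pow_pos hp s), ← pow_succ]

end LevelSum

end Dwork

open Dwork in
theorem stmt7_general (p : ℕ) [Fact p.Prime] (r d : ℕ)
    (R : Type*) [CommRing R] (Z W : (Fin d → ℕ) → R) :
    (∑ k ∈ Finset.Icc (0 : Fin d → ℕ) (fun _ => p ^ r - 1), Z k * W k) =
      Z 0 * (∑ k ∈ Finset.Icc (fun i => p ^ r * (0 : Fin d → ℕ) i)
                (fun i => p ^ r * ((0 : Fin d → ℕ) i + 1) - 1), W k) +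
      ∑ s ∈ Finset.range r,
        ∑ m ∈ Finset.Icc (0 : Fin d → ℕ) (fun _ => p ^ (r - s) - 1),
          (Z (fun i => m i * p ^ s) - Z (fun i => (m i / p) * p ^ (s + 1))) *
            (∑ k ∈ Finset.Icc (fun i => p ^ s * m i)
                (fun i => p ^ s * (m i + 1) - 1), W k) := by
  have hp : 0 < p := (Fact.out : p.Prime).pos
  simp only [← block.eq_1]
  have hstep : ∀ s ∈ range r,
      ∑ m ∈ Icc (0 : Fin d → ℕ) (fun _ => p ^ (r - s) - 1),
          (Z (fun i => m i * p ^ s) - Z (fun i => (m i / p) * p ^ (s + 1))) *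
            ∑ k ∈ block (p ^ s) m, W k =
        levelSum p r Z W s - levelSum p r Z W (s + 1) := fun s hs => by
    simp only [sub_mul, sum_sub_distrib,
      sum_div_mul_block_eq_levelSum_succ p r Z W hp (mem_range.1 hs)]
    rfl
  rw [sum_congr rfl hstep, sum_range_sub', ← levelSum_zero p r Z W, levelSum_self]
  exact (add_sub_cancel _ _).symm

/-- Multivariate Dwork combinatorial lemma: rearranging `∑ Z(k)W(k)` over the box
`0 ≤ k ≤ (pʳ−1)·1` into sums over `p`-adic blocks `W̄_s(m) = ∑_{pˢm ≤ k ≤ pˢ(m+1)−1} W(k)`. -/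
theorem stmt7 (p : ℕ) [Fact p.Prime] (r d : ℕ) (hd : 0 < d)
    (R : Type*) [CommRing R] (Z W : (Fin d → ℕ) → R) :
    (∑ k ∈ Finset.Icc (0 : Fin d → ℕ) (fun _ => p ^ r - 1), Z k * W k) =
      Z 0 * (∑ k ∈ Finset.Icc (fun i => p ^ r * (0 : Fin d → ℕ) i)
                (fun i => p ^ r * ((0 : Fin d → ℕ) i + 1) - 1), W k) +
      ∑ s ∈ Finset.range r,
        ∑ m ∈ Finset.Icc (0 : Fin d → ℕ) (fun _ => p ^ (r - s) - 1),
          (Z (fun i => m i * p ^ s) - Z (fun i => (m i / p) * p ^ (s + 1))) *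
            (∑ k ∈ Finset.Icc (fun i => p ^ s * m i)
                (fun i => p ^ s * (m i + 1) - 1), W k) :=
  stmt7_general p r d R Z W
end

section
/- Let p be a prime, d ≥ 1, and A, g : Z_{≥0}^d → Z_p \ {0} maps satisfying: (i) v_p(A(0)) = 0; (ii) A(n) ∈ g(n)·Z_p for all n; (iii) for all integers s ≥ 0 and all vectors v, u, n ∈ Z_{≥0}^d with 0 ≤ v_i < p and 0 ≤ u_i < p^s for all i, one has A(v + p·u + p^{s+1}·n)/A(v + p·u) − A(u + p^s·n)/A(u) ∈ p^{s+1}·(g(n)/g(v + p·u))·Z_p. Extend A to Z^d by A(n) = 0 if some n_i < 0. Then for all s ≥ 0 and all m, K, a ∈ Z^d with m ≥ 0 and 0 ≤ a_i < p: ∑_{p^s m ≤ k ≤ p^s(m+1)−1} ( A(a + p·k)·A(K − k) − A(a + p·(K − k))·A(k) ) ∈ p^{s+1}·g(m)·Z_p. -/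
/-!
Write `S_s(m, K)` (`blockSum`) for the sum over the block `p^s m + [0, p^s)^d` and prove
`‖S_s(m, K)‖ ≤ p^{-(s+1)} ‖g(m)‖` by strong induction on `s`. For `s = 0` the sum is a single
term, and hypothesis (iii) with `s = u = 0` says `A(a + p n) ≡ A(n) A(a) / A(0) mod p g(n)`.

For the step to `s + 1` put `K' = K - p^{s+1} m` and
`W_{t,σ} = ∑_{x ∈ [0, p^σ)^d} A(x + p^σ m) / A(x) · S_t(x, K')` (`weightedBlockSum`). By (iii) at
level `s + 1`, `S_{s+1}(m, K) ≡ W_{0,s+1}`. Moving the base-`p` digits of `x` one at a time from the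
weight into the inner block sum, `W_{t,σ+1} ≡ W_{t+1,σ}` by (iii) at level `σ` and the induction
hypothesis at level `t`; all these congruences hold modulo `p^{s+2} g(m)`. One ends at
`W_{s+1,0} = A(m)/A(0) · S_{s+1}(0, K')`. Finally `S_{s+1}(0, K)` is small: the
blocks `S_{s+1}(m', K)` tile `[0, K]`, over which the sum vanishes by the symmetry `k ↦ K - k`, so
`S_{s+1}(0, K) = -∑_{m' ≠ 0} S_{s+1}(m', K)`, and the reduction plus induction on `K` bound the
right-hand side.
-/

open Finset

namespace DworkCongruence

variable {d : ℕ}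

noncomputable def cube (q : ℤ) : Finset (Fin d → ℤ) := Fintype.piFinset fun _ => Ico 0 q

lemma mem_cube {q : ℤ} {x : Fin d → ℤ} : x ∈ cube q ↔ ∀ i, 0 ≤ x i ∧ x i < q := by
  simp [cube]

lemma nonneg_of_mem_cube {q : ℤ} {x : Fin d → ℤ} (hx : x ∈ cube q) : 0 ≤ x :=
  fun i => (mem_cube.1 hx i).1

lemma cube_one : cube (1 : ℤ) = ({0} : Finset (Fin d → ℤ)) := by
  ext x
  simp only [mem_cube, mem_singleton, funext_iff, Pi.zero_apply]
  exact forall_congr' fun i => by omega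

lemma add_smul_mem_cube_mul {q q' : ℤ} {v u : Fin d → ℤ} (hv : v ∈ cube q) (hu : u ∈ cube q') :
    v + q • u ∈ cube (q * q') := by
  rw [mem_cube] at *
  intro i
  obtain ⟨hv0, hvq⟩ := hv i
  obtain ⟨hu0, huq⟩ := hu i
  simp only [Pi.add_apply, Pi.smul_apply, smul_eq_mul]
  constructor <;> nlinarith

lemma sum_piFinset_Ico_mul {M : Type*} [AddCommMonoid M] {q : ℤ} (hq : 0 < q) (b : Fin d → ℤ)
    (f : (Fin d → ℤ) → M) :
    ∑ x ∈ Fintype.piFinset (fun i => Ico 0 (q * b i)), f x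
      = ∑ u ∈ Fintype.piFinset (fun i => Ico 0 (b i)), ∑ v ∈ cube q, f (v + q • u) := by
  rw [← sum_product']
  refine sum_nbij' (fun x => (fun i => x i / q, fun i => x i % q)) (fun z => z.2 + q • z.1)
    ?_ ?_ ?_ ?_ ?_
  · intro x hx
    simp only [mem_product, Fintype.mem_piFinset, mem_Ico, mem_cube] at hx ⊢
    refine ⟨fun i => ⟨Int.ediv_nonneg (hx i).1 hq.le, ?_⟩,
      fun i => ⟨Int.emod_nonneg _ hq.ne', Int.emod_lt_of_pos _ hq⟩⟩
    rw [Int.ediv_lt_iff_lt_mul hq, mul_comm]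
    exact (hx i).2
  · rintro ⟨u, v⟩ h
    simp only [mem_product, Fintype.mem_piFinset, mem_Ico, mem_cube] at h ⊢
    intro i
    obtain ⟨hu0, hub⟩ := h.1 i
    obtain ⟨hv0, hvq⟩ := h.2 i
    simp only [Pi.add_apply, Pi.smul_apply, smul_eq_mul]
    constructor <;> nlinarith
  · intro x _
    funext i
    simp only [Pi.add_apply, Pi.smul_apply, smul_eq_mul]
    linarith [Int.mul_ediv_add_emod (x i) q]
  · rintro ⟨u, v⟩ h
    simp only [mem_product, mem_cube] at h
    have hdiv : ∀ i, (v i + q * u i) / q = u i := fun i => by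
      rw [Int.add_mul_ediv_left _ _ hq.ne', Int.ediv_eq_zero_of_lt (h.2 i).1 (h.2 i).2, zero_add]
    have hmod : ∀ i, (v i + q * u i) % q = v i := fun i => by
      rw [Int.add_mul_emod_self_left, Int.emod_eq_of_lt (h.2 i).1 (h.2 i).2]
    simp only [Pi.add_apply, Pi.smul_apply, smul_eq_mul, hdiv, hmod]
  · intro x _
    congr 1
    funext i
    simp only [Pi.add_apply, Pi.smul_apply, smul_eq_mul]
    linarith [Int.mul_ediv_add_emod (x i) q]

lemma sum_cube_mul {M : Type*} [AddCommMonoid M] {q : ℤ} (hq : 0 < q) (q' : ℤ)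
    (f : (Fin d → ℤ) → M) :
    ∑ x ∈ cube (q * q'), f x = ∑ u ∈ cube q', ∑ v ∈ cube q, f (v + q • u) :=
  sum_piFinset_Ico_mul hq (fun _ => q') f

lemma sum_Icc_smul_eq_sum_cube {M : Type*} [AddCommMonoid M] (q : ℤ) (m : Fin d → ℤ)
    (f : (Fin d → ℤ) → M) :
    ∑ k ∈ Icc (q • m) (q • (m + 1) - 1), f k = ∑ r ∈ cube q, f (q • m + r) := by
  refine sum_nbij' (fun k => k - q • m) (fun r => q • m + r) ?_ ?_ ?_ ?_ ?_
  · intro k hk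
    simp only [mem_Icc, Pi.le_def, mem_cube] at hk ⊢
    intro i
    have h1 := hk.1 i
    have h2 := hk.2 i
    simp only [Pi.add_apply, Pi.sub_apply, Pi.smul_apply, smul_eq_mul, Pi.one_apply,
      mul_add, mul_one] at h1 h2 ⊢
    omega
  · intro r hr
    simp only [mem_Icc, Pi.le_def, mem_cube] at hr ⊢
    refine ⟨fun i => ?_, fun i => ?_⟩ <;>
    · have := hr i
      simp only [Pi.add_apply, Pi.sub_apply, Pi.smul_apply, smul_eq_mul, Pi.one_apply,
        mul_add, mul_one]
      omega
  · intro k _; abel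
  · intro r _; abel
  · intro k _; rw [add_sub_cancel]

section Algebra

variable {R : Type*} [CommRing R] (p : ℕ) (A : (Fin d → ℤ) → R) (a : Fin d → ℤ)

def dworkTerm (K k : Fin d → ℤ) : R :=
  A (a + (p : ℤ) • k) * A (K - k) - A (a + (p : ℤ) • (K - k)) * A k

noncomputable def blockSum (K : Fin d → ℤ) (s : ℕ) (m : Fin d → ℤ) : R :=
  ∑ r ∈ cube ((p : ℤ) ^ s), dworkTerm p A a K ((p : ℤ) ^ s • m + r)

variable {p A a}

lemma dworkTerm_eq_zero (hA : ∀ n, (∃ i, n i < 0) → A n = 0) {K k : Fin d → ℤ} {i : Fin d}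
    (hai : a i < p) (hi : K i < k i) : dworkTerm p A a K k = 0 := by
  have hKk : A (K - k) = 0 := hA _ ⟨i, by simpa using hi⟩
  have hpKk : (p : ℤ) * (K i - k i) ≤ -p := by nlinarith
  have haKk : A (a + (p : ℤ) • (K - k)) = 0 :=
    hA _ ⟨i, by simp only [Pi.add_apply, Pi.smul_apply, Pi.sub_apply, smul_eq_mul]; omega⟩
  simp only [dworkTerm, hKk, haKk, mul_zero, zero_mul, sub_zero]

lemma sum_dworkTerm_eq_zero (K : Fin d → ℤ) :
    ∑ k ∈ Fintype.piFinset (fun i => Icc 0 (K i)), dworkTerm p A a K k = 0 := by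
  have hrefl : ∀ k ∈ Fintype.piFinset (fun i => Icc 0 (K i)),
      K - k ∈ Fintype.piFinset (fun i => Icc 0 (K i)) := by
    intro k hk
    simp only [Fintype.mem_piFinset, mem_Icc, Pi.sub_apply] at hk ⊢
    exact fun i => ⟨by linarith [hk i], by linarith [hk i]⟩
  simp only [dworkTerm]
  rw [sum_sub_distrib, sub_eq_zero]
  refine sum_nbij' (fun k => K - k) (fun k => K - k) hrefl hrefl (fun k _ => sub_sub_cancel K k)
    (fun k _ => sub_sub_cancel K k) fun k _ => ?_
  rw [sub_sub_cancel, mul_comm]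

lemma blockSum_zero (K m : Fin d → ℤ) : blockSum p A a K 0 m = dworkTerm p A a K m := by
  simp [blockSum, cube_one]

lemma blockSum_succ (hp : 0 < p) (K x : Fin d → ℤ) (t : ℕ) :
    blockSum p A a K (t + 1) x = ∑ v ∈ cube (p : ℤ), blockSum p A a K t (v + (p : ℤ) • x) := by
  rw [blockSum, pow_succ, sum_cube_mul (pow_pos (by exact_mod_cast hp) t)]
  refine sum_congr rfl fun v _ => sum_congr rfl fun r _ => ?_
  congr 1
  module

lemma blockSum_zero_eq_zero (hA : ∀ n, (∃ i, n i < 0) → A n = 0) (ha : ∀ i, a i < p)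
    {K : Fin d → ℤ} {i : Fin d} (hi : K i < 0) (s : ℕ) : blockSum p A a K s 0 = 0 :=
  sum_eq_zero fun r hr =>
    dworkTerm_eq_zero hA (ha i) (by simpa using hi.trans_le (nonneg_of_mem_cube hr i))

lemma sum_blockSum_eq_zero (hA : ∀ n, (∃ i, n i < 0) → A n = 0) (hp : 0 < p)
    (ha : ∀ i, a i < p) (K : Fin d → ℤ) (s : ℕ) :
    ∑ m ∈ Fintype.piFinset (fun i => Ico 0 (K i / (p : ℤ) ^ s + 1)), blockSum p A a K s m = 0 := by
  have hq : (0 : ℤ) < (p : ℤ) ^ s := pow_pos (by exact_mod_cast hp) s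
  calc ∑ m ∈ Fintype.piFinset (fun i => Ico 0 (K i / (p : ℤ) ^ s + 1)), blockSum p A a K s m
      = ∑ k ∈ Fintype.piFinset (fun i => Ico 0 ((p : ℤ) ^ s * (K i / (p : ℤ) ^ s + 1))),
          dworkTerm p A a K k := by
        rw [sum_piFinset_Ico_mul hq]
        exact sum_congr rfl fun m _ => sum_congr rfl fun r _ => by rw [add_comm]
    _ = ∑ k ∈ Fintype.piFinset (fun i => Icc 0 (K i)), dworkTerm p A a K k := by
        refine (sum_subset (fun k hk => ?_) fun k hk hkK => ?_).symm
        · simp only [Fintype.mem_piFinset, mem_Icc, mem_Ico] at hk ⊢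
          refine fun i => ⟨(hk i).1, (hk i).2.trans_lt ?_⟩
          rw [mul_comm]
          exact Int.lt_ediv_add_one_mul_self _ hq
        · simp only [Fintype.mem_piFinset, mem_Icc, mem_Ico, not_forall, not_and_or,
            not_le] at hk hkK
          obtain ⟨i, hi | hi⟩ := hkK
          · exact absurd (hk i).1 hi.not_ge
          · exact dworkTerm_eq_zero hA (ha i) hi
    _ = 0 := sum_dworkTerm_eq_zero K

end Algebra

section Ultrametric

variable {E : Type*} [SeminormedAddCommGroup E] [IsUltrametricDist E] {C : ℝ}

lemma norm_le_of_norm_sub_le {x y : E} (hxy : ‖x - y‖ ≤ C) (hy : ‖y‖ ≤ C) : ‖x‖ ≤ C := by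
  simpa using (IsUltrametricDist.norm_add_le_max (x - y) y).trans (max_le hxy hy)

lemma norm_sub_le_of_norm_sub_le {x y z : E} (hxy : ‖x - y‖ ≤ C) (hyz : ‖y - z‖ ≤ C) :
    ‖x - z‖ ≤ C := by
  simpa using (IsUltrametricDist.norm_add_le_max (x - y) (y - z)).trans (max_le hxy hyz)

lemma norm_sub_le_of_forall_norm_sub_succ_le {f : ℕ → E} (hC : 0 ≤ C) {n : ℕ}
    (h : ∀ i < n, ‖f i - f (i + 1)‖ ≤ C) : ‖f 0 - f n‖ ≤ C := by
  rw [← sum_range_sub']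
  exact IsUltrametricDist.norm_sum_le_of_forall_le_of_nonneg hC fun i hi => h i (mem_range.1 hi)

end Ultrametric

variable {𝕜 : Type*} [NormedField 𝕜]

/-- Hypotheses (i)–(iii) of the theorem over a normed field, with `x ∈ p^{s+1} y ℤ_p` read
as `‖x‖ ≤ ρ^{s+1} ‖y‖` (so `ρ = p⁻¹` over `ℚ_p`). -/
structure IsDworkFamily (p : ℕ) (ρ : ℝ) (A g : (Fin d → ℤ) → 𝕜) : Prop where
  p_pos : 0 < p
  rho_nonneg : 0 ≤ ρ
  apply_of_exists_neg : ∀ n, (∃ i, n i < 0) → A n = 0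
  apply_ne_zero : ∀ n, 0 ≤ n → A n ≠ 0
  norm_apply_zero : ‖A 0‖ = 1
  norm_apply_le : ∀ n, 0 ≤ n → ‖A n‖ ≤ ‖g n‖
  norm_g_le_one : ∀ n, 0 ≤ n → ‖g n‖ ≤ 1
  norm_ratio_sub_le : ∀ (s : ℕ) (v u n : Fin d → ℤ),
    v ∈ cube (p : ℤ) → u ∈ cube ((p : ℤ) ^ s) → 0 ≤ n →
      ‖A (v + (p : ℤ) • u + (p : ℤ) ^ (s + 1) • n) / A (v + (p : ℤ) • u)
          - A (u + (p : ℤ) ^ s • n) / A u‖ * ‖g (v + (p : ℤ) • u)‖ ≤ ρ ^ (s + 1) * ‖g n‖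

noncomputable def weightedBlockSum (p : ℕ) (A : (Fin d → ℤ) → 𝕜) (a K m : Fin d → ℤ) (t σ : ℕ) :
    𝕜 :=
  ∑ x ∈ cube ((p : ℤ) ^ σ), A (x + (p : ℤ) ^ σ • m) / A x * blockSum p A a K t x

lemma weightedBlockSum_zero_right (p : ℕ) (A : (Fin d → ℤ) → 𝕜) (a K m : Fin d → ℤ) (t : ℕ) :
    weightedBlockSum p A a K m t 0 = A m / A 0 * blockSum p A a K t 0 := by
  simp [weightedBlockSum, cube_one]

namespace IsDworkFamily

variable {p : ℕ} {ρ : ℝ} {A g : (Fin d → ℤ) → 𝕜} {a : Fin d → ℤ}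

lemma norm_apply_le_one (hAg : IsDworkFamily p ρ A g) (n : Fin d → ℤ) : ‖A n‖ ≤ 1 := by
  by_cases hn : 0 ≤ n
  · exact (hAg.norm_apply_le n hn).trans (hAg.norm_g_le_one n hn)
  · obtain ⟨i, hi⟩ : ∃ i, n i < 0 := by simpa [Pi.le_def] using hn
    simp [hAg.apply_of_exists_neg n ⟨i, hi⟩]

lemma norm_apply_sub_mul_div_le (hAg : IsDworkFamily p ρ A g) {s : ℕ} {v u n : Fin d → ℤ}
    (hv : v ∈ cube (p : ℤ)) (hu : u ∈ cube ((p : ℤ) ^ s)) (hn : 0 ≤ n) :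
    ‖A (v + (p : ℤ) • u + (p : ℤ) ^ (s + 1) • n) - A (u + (p : ℤ) ^ s • n)
        * (A (v + (p : ℤ) • u) / A u)‖ ≤ ρ ^ (s + 1) * ‖g n‖ := by
  set x := v + (p : ℤ) • u
  have hx : 0 ≤ x := nonneg_of_mem_cube (add_smul_mem_cube_mul hv hu)
  calc _ = ‖A (x + (p : ℤ) ^ (s + 1) • n) / A x - A (u + (p : ℤ) ^ s • n) / A u‖ * ‖A x‖ := by
        rw [← norm_mul, sub_mul, div_mul_cancel₀ _ (hAg.apply_ne_zero x hx), div_mul_eq_mul_div,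
          mul_div_assoc]
    _ ≤ ‖A (x + (p : ℤ) ^ (s + 1) • n) / A x - A (u + (p : ℤ) ^ s • n) / A u‖ * ‖g x‖ := by
        gcongr
        exact hAg.norm_apply_le x hx
    _ ≤ ρ ^ (s + 1) * ‖g n‖ := hAg.norm_ratio_sub_le s v u n hv hu hn

lemma norm_apply_add_smul_sub_le (hAg : IsDworkFamily p ρ A g) (ha : a ∈ cube (p : ℤ))
    {n : Fin d → ℤ} (hn : 0 ≤ n) : ‖A (a + (p : ℤ) • n) - A n * (A a / A 0)‖ ≤ ρ * ‖g n‖ := by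
  simpa using hAg.norm_apply_sub_mul_div_le (s := 0) (u := 0) ha (by simp [cube_one]) hn

lemma norm_blockSum_zero_le [IsUltrametricDist 𝕜] (hAg : IsDworkFamily p ρ A g)
    (ha : a ∈ cube (p : ℤ)) (K : Fin d → ℤ) {m : Fin d → ℤ} (hm : 0 ≤ m) :
    ‖blockSum p A a K 0 m‖ ≤ ρ * ‖g m‖ := by
  rw [blockSum_zero]
  by_cases hmK : m ≤ K
  swap
  · obtain ⟨i, hi⟩ : ∃ i, K i < m i := by simpa [Pi.le_def] using hmK
    rw [dworkTerm_eq_zero hAg.apply_of_exists_neg (mem_cube.1 ha i).2 hi, norm_zero]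
    exact mul_nonneg hAg.rho_nonneg (norm_nonneg _)
  have hKm : 0 ≤ K - m := sub_nonneg.2 hmK
  set c := A a / A 0
  have hsplit : dworkTerm p A a K m = (A (a + (p : ℤ) • m) - A m * c) * A (K - m)
      + (A (K - m) * c - A (a + (p : ℤ) • (K - m))) * A m := by
    simp only [dworkTerm]
    ring
  rw [hsplit]
  refine (IsUltrametricDist.norm_add_le_max _ _).trans (max_le ?_ ?_) <;> rw [norm_mul]
  · exact (mul_le_mul (hAg.norm_apply_add_smul_sub_le ha hm) (hAg.norm_apply_le_one _)
      (norm_nonneg _) (mul_nonneg hAg.rho_nonneg (norm_nonneg _))).trans_eq (mul_one _)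
  · rw [norm_sub_rev]
    have hρ : ρ * ‖g (K - m)‖ ≤ ρ := mul_le_of_le_one_right hAg.rho_nonneg (hAg.norm_g_le_one _ hKm)
    exact mul_le_mul ((hAg.norm_apply_add_smul_sub_le ha hKm).trans hρ) (hAg.norm_apply_le m hm)
      (norm_nonneg _) hAg.rho_nonneg

lemma norm_blockSum_sub_weightedBlockSum_le [IsUltrametricDist 𝕜] (hAg : IsDworkFamily p ρ A g)
    (ha : a ∈ cube (p : ℤ)) (K : Fin d → ℤ) {m : Fin d → ℤ} (hm : 0 ≤ m) (s : ℕ) :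
    ‖blockSum p A a K (s + 1) m - weightedBlockSum p A a (K - (p : ℤ) ^ (s + 1) • m) m 0 (s + 1)‖
      ≤ ρ ^ (s + 2) * ‖g m‖ := by
  rw [blockSum, weightedBlockSum, ← sum_sub_distrib]
  refine IsUltrametricDist.norm_sum_le_of_forall_le_of_nonneg
    (mul_nonneg (pow_nonneg hAg.rho_nonneg _) (norm_nonneg _)) fun r hr => ?_
  have hAr : A r ≠ 0 := hAg.apply_ne_zero r (nonneg_of_mem_cube hr)
  have hsplit : dworkTerm p A a K ((p : ℤ) ^ (s + 1) • m + r)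
      - A (r + (p : ℤ) ^ (s + 1) • m) / A r * blockSum p A a (K - (p : ℤ) ^ (s + 1) • m) 0 r
      = (A (a + (p : ℤ) • r + (p : ℤ) ^ (s + 1 + 1) • m)
          - A (r + (p : ℤ) ^ (s + 1) • m) * (A (a + (p : ℤ) • r) / A r))
        * A (K - (p : ℤ) ^ (s + 1) • m - r) := by
    rw [blockSum_zero]
    simp only [dworkTerm]
    rw [show a + (p : ℤ) • ((p : ℤ) ^ (s + 1) • m + r) = a + (p : ℤ) • r + (p : ℤ) ^ (s + 1 + 1) • m
        by module, sub_add_eq_sub_sub, add_comm _ r]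
    field_simp
    ring
  rw [hsplit, norm_mul]
  exact (mul_le_mul (hAg.norm_apply_sub_mul_div_le ha hr hm) (hAg.norm_apply_le_one _)
    (norm_nonneg _) (mul_nonneg (pow_nonneg hAg.rho_nonneg _) (norm_nonneg _))).trans_eq (mul_one _)

lemma norm_weightedBlockSum_sub_le [IsUltrametricDist 𝕜] (hAg : IsDworkFamily p ρ A g)
    {K m : Fin d → ℤ} (hm : 0 ≤ m) {t : ℕ}
    (ih : ∀ y, 0 ≤ y → ‖blockSum p A a K t y‖ ≤ ρ ^ (t + 1) * ‖g y‖) (σ : ℕ) :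
    ‖weightedBlockSum p A a K m t (σ + 1) - weightedBlockSum p A a K m (t + 1) σ‖
      ≤ ρ ^ (t + σ + 2) * ‖g m‖ := by
  have hp : (0 : ℤ) < p := by exact_mod_cast hAg.p_pos
  have hC : 0 ≤ ρ ^ (t + σ + 2) * ‖g m‖ := mul_nonneg (pow_nonneg hAg.rho_nonneg _) (norm_nonneg _)
  rw [weightedBlockSum, weightedBlockSum, show cube ((p : ℤ) ^ (σ + 1)) = cube ((p : ℤ) * p ^ σ)
    by rw [pow_succ'], sum_cube_mul hp]
  simp_rw [blockSum_succ hAg.p_pos, mul_sum, ← sum_sub_distrib]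
  refine IsUltrametricDist.norm_sum_le_of_forall_le_of_nonneg hC fun x hx =>
    IsUltrametricDist.norm_sum_le_of_forall_le_of_nonneg hC fun v hv => ?_
  rw [← sub_mul, norm_mul]
  have hvx : 0 ≤ v + (p : ℤ) • x := nonneg_of_mem_cube (add_smul_mem_cube_mul hv hx)
  set δ := ‖A (v + (p : ℤ) • x + (p : ℤ) ^ (σ + 1) • m) / A (v + (p : ℤ) • x)
    - A (x + (p : ℤ) ^ σ • m) / A x‖
  calc δ * ‖blockSum p A a K t (v + (p : ℤ) • x)‖
      ≤ δ * (ρ ^ (t + 1) * ‖g (v + (p : ℤ) • x)‖) := by gcongr; exact ih _ hvx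
    _ = ρ ^ (t + 1) * (δ * ‖g (v + (p : ℤ) • x)‖) := by ring
    _ ≤ ρ ^ (t + 1) * (ρ ^ (σ + 1) * ‖g m‖) :=
        mul_le_mul_of_nonneg_left (hAg.norm_ratio_sub_le σ v x m hv hx hm)
          (pow_nonneg hAg.rho_nonneg _)
    _ = ρ ^ (t + σ + 2) * ‖g m‖ := by ring

lemma norm_blockSum_sub_mul_blockSum_zero_le [IsUltrametricDist 𝕜] (hAg : IsDworkFamily p ρ A g)
    (ha : a ∈ cube (p : ℤ)) {s : ℕ}
    (ih : ∀ t ≤ s, ∀ y K, 0 ≤ y → ‖blockSum p A a K t y‖ ≤ ρ ^ (t + 1) * ‖g y‖)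
    {m : Fin d → ℤ} (hm : 0 ≤ m) (K : Fin d → ℤ) :
    ‖blockSum p A a K (s + 1) m - A m / A 0 * blockSum p A a (K - (p : ℤ) ^ (s + 1) • m) (s + 1) 0‖
      ≤ ρ ^ (s + 2) * ‖g m‖ := by
  set K' := K - (p : ℤ) ^ (s + 1) • m
  rw [← weightedBlockSum_zero_right]
  refine norm_sub_le_of_norm_sub_le (hAg.norm_blockSum_sub_weightedBlockSum_le ha K hm s) ?_
  have hC : 0 ≤ ρ ^ (s + 2) * ‖g m‖ := mul_nonneg (pow_nonneg hAg.rho_nonneg _) (norm_nonneg _)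
  have hstep : ∀ t < s + 1, ‖weightedBlockSum p A a K' m t (s + 1 - t)
      - weightedBlockSum p A a K' m (t + 1) (s + 1 - (t + 1))‖ ≤ ρ ^ (s + 2) * ‖g m‖ := by
    intro t ht
    obtain ⟨σ, rfl⟩ : ∃ σ, s = t + σ := ⟨s - t, by omega⟩
    rw [show t + σ + 1 - t = σ + 1 by omega, show t + σ + 1 - (t + 1) = σ by omega]
    exact hAg.norm_weightedBlockSum_sub_le hm (fun y hy => ih t (by omega) y K' hy) σ
  simpa only [Nat.sub_zero, Nat.sub_self] using norm_sub_le_of_forall_norm_sub_succ_le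
    (f := fun t => weightedBlockSum p A a K' m t (s + 1 - t)) hC hstep

lemma norm_le_of_norm_sub_div_mul_le [IsUltrametricDist 𝕜] (hAg : IsDworkFamily p ρ A g)
    {m : Fin d → ℤ} (hm : 0 ≤ m) {x y : 𝕜} {C : ℝ} (hxy : ‖x - A m / A 0 * y‖ ≤ C * ‖g m‖)
    (hy : ‖y‖ ≤ C) : ‖x‖ ≤ C * ‖g m‖ := by
  refine norm_le_of_norm_sub_le hxy ?_
  rw [norm_mul, norm_div, hAg.norm_apply_zero, div_one, mul_comm C]
  exact mul_le_mul (hAg.norm_apply_le m hm) hy (norm_nonneg _) (norm_nonneg _)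

lemma norm_blockSum_zero_le_of_reduction [IsUltrametricDist 𝕜] (hAg : IsDworkFamily p ρ A g)
    (ha : a ∈ cube (p : ℤ)) {s : ℕ} {C : ℝ} (hC : 0 ≤ C)
    (hred : ∀ m K, 0 ≤ m →
      ‖blockSum p A a K s m - A m / A 0 * blockSum p A a (K - (p : ℤ) ^ s • m) s 0‖ ≤ C * ‖g m‖)
    (K : Fin d → ℤ) : ‖blockSum p A a K s 0‖ ≤ C := by
  have ha' : ∀ i, a i < p := fun i => (mem_cube.1 ha i).2
  induction hn : (∑ i, K i).toNat using Nat.strong_induction_on generalizing K with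
  | _ n ih =>
  by_cases hK : 0 ≤ K
  swap
  · obtain ⟨i, hi⟩ : ∃ i, K i < 0 := by simpa [Pi.le_def] using hK
    rw [blockSum_zero_eq_zero hAg.apply_of_exists_neg ha' hi, norm_zero]
    exact hC
  set q : ℤ := (p : ℤ) ^ s
  have hq : 0 < q := pow_pos (by exact_mod_cast hAg.p_pos) s
  have h0 : (0 : Fin d → ℤ) ∈ Fintype.piFinset fun i => Ico 0 (K i / q + 1) := by
    simpa using fun i => Int.ediv_nonneg (hK i) hq.le
  have hsum := sum_blockSum_eq_zero hAg.apply_of_exists_neg hAg.p_pos ha' K s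
  rw [← add_sum_erase _ _ h0, add_eq_zero_iff_eq_neg] at hsum
  rw [hsum, norm_neg]
  refine IsUltrametricDist.norm_sum_le_of_forall_le_of_nonneg hC fun m hmem => ?_
  obtain ⟨hm0, hmK⟩ := mem_erase.1 hmem
  simp only [Fintype.mem_piFinset, mem_Ico, Int.lt_add_one_iff] at hmK
  have hm : 0 ≤ m := fun i => (hmK i).1
  have hqm : ∀ i, q * m i ≤ K i := fun i =>
    (mul_le_mul_of_nonneg_left (hmK i).2 hq.le).trans (Int.mul_ediv_self_le hq.ne')
  have hlt : ∑ i, (K - q • m) i < ∑ i, K i := by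
    obtain ⟨i, hi⟩ := Function.ne_iff.1 hm0
    refine sum_lt_sum (fun j _ => ?_) ⟨i, mem_univ _, ?_⟩ <;>
      simp only [Pi.sub_apply, Pi.smul_apply, smul_eq_mul]
    · linarith [mul_nonneg hq.le (hm j)]
    · have : 0 < m i := lt_of_le_of_ne (hm i) (Ne.symm hi)
      nlinarith
  have hnonneg : 0 ≤ ∑ i, (K - q • m) i := sum_nonneg fun i _ => by
    simpa [smul_eq_mul] using hqm i
  have hIH := ih _ (by omega) (K - q • m) rfl
  exact (hAg.norm_le_of_norm_sub_div_mul_le hm (hred m K hm) hIH).trans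
    (mul_le_of_le_one_right hC (hAg.norm_g_le_one m hm))

theorem norm_blockSum_le [IsUltrametricDist 𝕜] (hAg : IsDworkFamily p ρ A g)
    (ha : a ∈ cube (p : ℤ)) (s : ℕ) (m K : Fin d → ℤ) (hm : 0 ≤ m) :
    ‖blockSum p A a K s m‖ ≤ ρ ^ (s + 1) * ‖g m‖ := by
  induction s using Nat.strong_induction_on generalizing m K with
  | _ s ih =>
  rcases s with _ | s
  · simpa using hAg.norm_blockSum_zero_le ha K hm
  have hred : ∀ m K, 0 ≤ m → ‖blockSum p A a K (s + 1) m
      - A m / A 0 * blockSum p A a (K - (p : ℤ) ^ (s + 1) • m) (s + 1) 0‖ ≤ ρ ^ (s + 2) * ‖g m‖ :=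
    fun m K hm => hAg.norm_blockSum_sub_mul_blockSum_zero_le ha (fun t ht => ih t (by omega)) hm K
  exact hAg.norm_le_of_norm_sub_div_mul_le hm (hred m K hm)
    (hAg.norm_blockSum_zero_le_of_reduction ha (pow_nonneg hAg.rho_nonneg _) hred _)

end IsDworkFamily

end DworkCongruence

theorem stmt8_general (p : ℕ) [Fact p.Prime] (d : ℕ)
    (A g : (Fin d → ℤ) → ℚ_[p])
    (hAneg : ∀ n, (∃ i, n i < 0) → A n = 0)
    (hA : ∀ n : Fin d → ℤ, (∀ i, 0 ≤ n i) → A n ≠ 0 ∧ ‖A n‖ ≤ 1)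
    (hg : ∀ n : Fin d → ℤ, (∀ i, 0 ≤ n i) → g n ≠ 0 ∧ ‖g n‖ ≤ 1)
    (h1 : ‖A 0‖ = 1)
    (h2 : ∀ n : Fin d → ℤ, (∀ i, 0 ≤ n i) → ‖A n / g n‖ ≤ 1)
    (h3 : ∀ (s : ℕ) (v u n : Fin d → ℤ),
      (∀ i, 0 ≤ v i ∧ v i < p) → (∀ i, 0 ≤ u i ∧ u i < (p : ℤ) ^ s) → (∀ i, 0 ≤ n i) →
      ‖(A (v + (p : ℤ) • u + (p : ℤ) ^ (s + 1) • n) / A (v + (p : ℤ) • u) -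
          A (u + (p : ℤ) ^ s • n) / A u) * g (v + (p : ℤ) • u) / g n‖
        ≤ (p : ℝ) ^ (-(s + 1 : ℤ))) :
    ∀ (s : ℕ) (m K a : Fin d → ℤ), (∀ i, 0 ≤ m i) → (∀ i, 0 ≤ a i ∧ a i < p) →
      ‖(∑ k ∈ Finset.Icc ((p : ℤ) ^ s • m) ((p : ℤ) ^ s • (m + 1) - 1),
          (A (a + (p : ℤ) • k) * A (K - k) - A (a + (p : ℤ) • (K - k)) * A k)) / g m‖
        ≤ (p : ℝ) ^ (-(s + 1 : ℤ)) := by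
  intro s m K a hm ha
  have hzpow (s : ℕ) : (p : ℝ) ^ (-(s + 1 : ℤ)) = (p : ℝ)⁻¹ ^ (s + 1) := by
    rw [zpow_neg, ← Nat.cast_succ, zpow_natCast, inv_pow]
  have hg0 (n : Fin d → ℤ) (hn : 0 ≤ n) : 0 < ‖g n‖ := norm_pos_iff.2 (hg n hn).1
  have hfam : DworkCongruence.IsDworkFamily p (p : ℝ)⁻¹ A g :=
    { p_pos := (Fact.out : p.Prime).pos
      rho_nonneg := by positivity
      apply_of_exists_neg := hAneg
      apply_ne_zero := fun n hn => (hA n hn).1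
      norm_apply_zero := h1
      norm_apply_le := fun n hn => by simpa [norm_div, div_le_one (hg0 n hn)] using h2 n hn
      norm_g_le_one := fun n hn => (hg n hn).2
      norm_ratio_sub_le := fun s v u n hv hu hn => by
        have := h3 s v u n (DworkCongruence.mem_cube.1 hv) (DworkCongruence.mem_cube.1 hu) hn
        rwa [norm_div, norm_mul, div_le_iff₀ (hg0 n hn), hzpow] at this }
  rw [DworkCongruence.sum_Icc_smul_eq_sum_cube, norm_div, div_le_iff₀ (hg0 m hm), hzpow]
  exact hfam.norm_blockSum_le (DworkCongruence.mem_cube.2 ha) s m K hm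

/-- Multivariate generalisation of Dwork's formal congruence theorem (Theorem 1 of
Krattenthaler–Rivoal). `A, g : ℤ_{≥0}^d → ℤ_p \ {0}` (viewed inside `ℚ_p`), with `A`
extended by `0` to vectors having a negative coordinate. -/
theorem stmt8 (p : ℕ) [Fact p.Prime] (d : ℕ) (hd : 0 < d)
    (A g : (Fin d → ℤ) → ℚ_[p])
    (hAneg : ∀ n, (∃ i, n i < 0) → A n = 0)
    (hA : ∀ n : Fin d → ℤ, (∀ i, 0 ≤ n i) → A n ≠ 0 ∧ ‖A n‖ ≤ 1)
    (hg : ∀ n : Fin d → ℤ, (∀ i, 0 ≤ n i) → g n ≠ 0 ∧ ‖g n‖ ≤ 1)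
    (h1 : ‖A 0‖ = 1)
    (h2 : ∀ n : Fin d → ℤ, (∀ i, 0 ≤ n i) → ‖A n / g n‖ ≤ 1)
    (h3 : ∀ (s : ℕ) (v u n : Fin d → ℤ),
      (∀ i, 0 ≤ v i ∧ v i < p) → (∀ i, 0 ≤ u i ∧ u i < (p : ℤ) ^ s) → (∀ i, 0 ≤ n i) →
      ‖(A (v + (p : ℤ) • u + (p : ℤ) ^ (s + 1) • n) / A (v + (p : ℤ) • u) -
          A (u + (p : ℤ) ^ s • n) / A u) * g (v + (p : ℤ) • u) / g n‖
        ≤ (p : ℝ) ^ (-(s + 1 : ℤ))) :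
    ∀ (s : ℕ) (m K a : Fin d → ℤ), (∀ i, 0 ≤ m i) → (∀ i, 0 ≤ a i ∧ a i < p) →
      ‖(∑ k ∈ Finset.Icc ((p : ℤ) ^ s • m) ((p : ℤ) ^ s • (m + 1) - 1),
          (A (a + (p : ℤ) • k) * A (K - k) - A (a + (p : ℤ) • (K - k)) * A k)) / g m‖
        ≤ (p : ℝ) ^ (-(s + 1 : ℤ)) :=
  stmt8_general p d A g hAneg hA hg h1 h2 h3
end

section
/- Let p be a prime, d ≥ 1, s ≥ 0 an integer, and m, L, N^{(1)},...,N^{(k)} ∈ Z^d nonnegative integer vectors with L ≤ N^{(1)} componentwise. Define B_N(m) = ∏_{j=1}^k (∑_i N_i^{(j)} m_i)!/∏_i (m_i!)^{N_i^{(j)}}. Then B_N(m)·( H_{p^s·∑_i L_i m_i} − H_{p^{s+1}·∑_i L_i ⌊m_i/p⌋} ) ∈ p^{−s}·Z_p, where H_n is the n-th harmonic number with H_0 = 0. -/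
/-- `B_N(m) = ∏ⱼ (∑ᵢ Nᵢ⁽ʲ⁾ mᵢ)! / ∏ᵢ (mᵢ!)^{Nᵢ⁽ʲ⁾}`. -/
def BfamFun {d k : ℕ} (N : Fin k → Fin d → ℕ) (m : Fin d → ℕ) : ℚ :=
  ∏ j, (((∑ i, N j i * m i).factorial : ℚ) / ∏ i, ((m i).factorial : ℚ) ^ (N j i))

/-! Write `A = pˢ L·m` and `A' = p^{s+1} L·⌊m/p⌋`, so that `B (H_A - H_{A'}) = ∑_{A' < a ≤ A} B/a`
with `B` a natural number. If `v_p(a) = s + e` with `e > 0`, then `a = pˢ c` with `pᵉ ∣ c` and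
`p L·⌊m/p⌋ < c ≤ L·m`. For every `1 ≤ r ≤ e` the integer `c/pʳ` then lies strictly above
`∑ Lᵢ ⌊mᵢ/pʳ⌋` and at most at `⌊L·m/pʳ⌋`, so the `r`-th term of Legendre's formula for the
`p`-adic valuation of `(N⁽¹⁾·m)! / ∏ (mᵢ!)^{N⁽¹⁾ᵢ}` is positive (these terms only grow from `L`
to `N⁽¹⁾ ≥ L`). Hence `pᵉ ∣ B`, and `v_p(B/a) ≥ -s`. -/

open Finset
open scoped Nat

section FloorDefect

variable {ι : Type*} [Fintype ι]

lemma sum_mul_div_le_sum_mul_div (w m : ι → ℕ) (q : ℕ) :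
    ∑ i, w i * (m i / q) ≤ (∑ i, w i * m i) / q := by
  rcases q.eq_zero_or_pos with rfl | hq
  · simp
  rw [Nat.le_div_iff_mul_le hq, sum_mul]
  refine sum_le_sum fun i _ => ?_
  rw [mul_assoc]
  exact Nat.mul_le_mul_left _ (Nat.div_mul_le_self _ _)

/-- The `q`-th term of Legendre's formula for `(∑ wᵢ mᵢ)! / ∏ (mᵢ!)^{wᵢ}`; by
`sum_mul_div_le_sum_mul_div` the truncated subtraction never truncates. -/
def floorDefect (w m : ι → ℕ) (q : ℕ) : ℕ :=
  (∑ i, w i * m i) / q - ∑ i, w i * (m i / q)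

lemma floorDefect_mono {L w : ι → ℕ} (hLw : L ≤ w) (m : ι → ℕ) (q : ℕ) :
    floorDefect L m q ≤ floorDefect w m q := by
  have hsplit : ∀ f : ι → ℕ, ∑ i, w i * f i = ∑ i, L i * f i + ∑ i, (w i - L i) * f i := by
    intro f
    rw [← sum_add_distrib]
    exact sum_congr rfl fun i _ => by rw [← add_mul, Nat.add_sub_cancel' (hLw i)]
  have hL := sum_mul_div_le_sum_mul_div L m q
  have hwL := sum_mul_div_le_sum_mul_div (w - L) m q
  have hadd :=
    Nat.div_add_div_le_add_div (x := ∑ i, L i * m i) (y := ∑ i, (w i - L i) * m i) (z := q)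
  simp only [Pi.sub_apply] at hwL
  unfold floorDefect
  rw [hsplit m, hsplit fun i => m i / q]
  omega

lemma floorDefect_pos {p r c : ℕ} {L m : ι → ℕ} (hc : p ^ (r + 1) ∣ c)
    (hlo : p * ∑ i, L i * (m i / p) < c) (hhi : c ≤ ∑ i, L i * m i) :
    0 < floorDefect L m (p ^ (r + 1)) := by
  obtain ⟨u, rfl⟩ := hc
  have hp : 0 < p := Nat.pos_of_ne_zero (by rintro rfl; simp at hlo)
  have hpr : 0 < p ^ r := pow_pos hp r
  have hlower : ∑ i, L i * (m i / p ^ (r + 1)) < u :=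
    calc ∑ i, L i * (m i / p ^ (r + 1)) = ∑ i, L i * (m i / p / p ^ r) := by
          simp only [Nat.div_div_eq_div_mul, pow_succ']
      _ ≤ (∑ i, L i * (m i / p)) / p ^ r := sum_mul_div_le_sum_mul_div _ _ _
      _ < u := by
          rw [Nat.div_lt_iff_lt_mul hpr]
          refine Nat.lt_of_mul_lt_mul_left (a := p) ?_
          calc p * ∑ i, L i * (m i / p) < p ^ (r + 1) * u := hlo
            _ = p * (u * p ^ r) := by ring
  have hupper : u ≤ (∑ i, L i * m i) / p ^ (r + 1) :=
    (Nat.le_div_iff_mul_le (pow_pos hp _)).2 (by rw [mul_comm]; exact hhi)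
  unfold floorDefect
  omega

def factorialQuot (w m : ι → ℕ) : ℕ :=
  (∑ i, w i * m i)! / ∏ i, (m i)! ^ w i

lemma prod_factorial_pow_dvd_factorial_sum (w m : ι → ℕ) :
    ∏ i, (m i)! ^ w i ∣ (∑ i, w i * m i)! := by
  have h := Nat.prod_factorial_dvd_factorial_sum
    ((univ : Finset ι).sigma fun i => range (w i)) (fun x => m x.1)
  rw [prod_sigma, sum_sigma] at h
  simpa [prod_const, sum_const, mul_comm] using h

lemma factorialQuot_pos (w m : ι → ℕ) : 0 < factorialQuot w m :=
  Nat.div_pos (Nat.le_of_dvd (Nat.factorial_pos _) (prod_factorial_pow_dvd_factorial_sum w m))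
    (by positivity)

lemma cast_factorialQuot (w m : ι → ℕ) :
    (factorialQuot w m : ℚ) = (∑ i, w i * m i)! / ∏ i, ((m i)! : ℚ) ^ w i := by
  rw [factorialQuot, Nat.cast_div (prod_factorial_pow_dvd_factorial_sum w m) (by positivity)]
  push_cast
  rfl

lemma padicValNat_factorial_of_lt (p : ℕ) [Fact p.Prime] {n b : ℕ} (hnb : n < b) :
    padicValNat p n ! = ∑ r ∈ Ico 1 b, n / p ^ r :=
  padicValNat_factorial ((Nat.log_le_self p n).trans_lt hnb)

lemma padicValNat_factorialQuot (p : ℕ) [hp : Fact p.Prime] (w m : ι → ℕ) {b : ℕ}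
    (hb : ∑ i, w i * m i < b) :
    padicValNat p (factorialQuot w m) = ∑ r ∈ Ico 1 b, floorDefect w m (p ^ r) := by
  have hprod : padicValNat p (∏ i, (m i)! ^ w i) = ∑ r ∈ Ico 1 b, ∑ i, w i * (m i / p ^ r) := by
    rw [← Nat.factorization_def _ hp.out,
      Nat.factorization_prod fun i _ => pow_ne_zero _ (Nat.factorial_ne_zero _), sum_comm]
    simp only [Finsupp.coe_finsetSum, Finset.sum_apply, Nat.factorization_pow, Finsupp.smul_apply,
      smul_eq_mul, ← mul_sum]
    refine sum_congr rfl fun i _ => ?_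
    rcases (w i).eq_zero_or_pos with hw | hw
    · simp [hw]
    have hmb : m i < b := lt_of_le_of_lt
      ((Nat.le_mul_of_pos_left _ hw).trans (single_le_sum (fun j _ => Nat.zero_le (w j * m j))
        (mem_univ i))) hb
    rw [Nat.factorization_def _ hp.out, padicValNat_factorial_of_lt p hmb]
  rw [factorialQuot, padicValNat.div_of_dvd (prod_factorial_pow_dvd_factorial_sum w m), hprod,
    padicValNat_factorial_of_lt p hb, ← sum_tsub_distrib]
  · rfl
  · exact fun r _ => sum_mul_div_le_sum_mul_div w m _

lemma le_padicValNat_factorialQuot (p : ℕ) [Fact p.Prime] {e c : ℕ} {L w m : ι → ℕ}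
    (hLw : L ≤ w) (hc : p ^ e ∣ c) (hlo : p * ∑ i, L i * (m i / p) < c)
    (hhi : c ≤ ∑ i, L i * m i) :
    e ≤ padicValNat p (factorialQuot w m) := by
  rw [padicValNat_factorialQuot p w m (b := e + 1 + ∑ i, w i * m i) (by omega)]
  calc e = ∑ r ∈ Ico 1 (e + 1), 1 := by simp
    _ ≤ ∑ r ∈ Ico 1 (e + 1), floorDefect w m (p ^ r) := sum_le_sum fun r hr => ?_
    _ ≤ _ := sum_le_sum_of_subset (Ico_subset_Ico_right (by omega))
  obtain ⟨r, rfl⟩ : ∃ r', r = r' + 1 := ⟨r - 1, by rw [mem_Ico] at hr; omega⟩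
  have hrc : p ^ (r + 1) ∣ c := (pow_dvd_pow p (by rw [mem_Ico] at hr; omega)).trans hc
  exact (floorDefect_pos hrc hlo hhi).trans_le (floorDefect_mono hLw m _)

lemma padicValNat_le_add_padicValNat_factorialQuot (p : ℕ) [hp : Fact p.Prime] {s a : ℕ}
    {L w m : ι → ℕ} (hLw : L ≤ w) (hlo : p ^ (s + 1) * ∑ i, L i * (m i / p) < a)
    (hhi : a ≤ p ^ s * ∑ i, L i * m i) :
    padicValNat p a ≤ s + padicValNat p (factorialQuot w m) := by
  rcases le_or_gt (padicValNat p a) s with h | h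
  · omega
  obtain ⟨e, he⟩ := Nat.exists_eq_add_of_le h.le
  obtain ⟨u, hu⟩ : p ^ padicValNat p a ∣ a := pow_padicValNat_dvd
  have ha : a = p ^ s * (p ^ e * u) := by rw [hu, he, pow_add, mul_assoc]
  rw [ha, pow_succ, mul_assoc] at hlo
  rw [ha] at hhi
  have := le_padicValNat_factorialQuot p hLw (dvd_mul_right _ u)
    (Nat.lt_of_mul_lt_mul_left hlo) (Nat.le_of_mul_le_mul_left hhi (pow_pos hp.out.pos s))
  omega

end FloorDefect

lemma padicNorm_natCast_div_le (p : ℕ) [hp : Fact p.Prime] {a b : ℕ} (s : ℕ) (ha : a ≠ 0)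
    (hb : b ≠ 0) (h : padicValNat p a ≤ s + padicValNat p b) :
    padicNorm p ((b : ℚ) / a) ≤ (p : ℚ) ^ s := by
  have ha' : (a : ℚ) ≠ 0 := Nat.cast_ne_zero.2 ha
  have hb' : (b : ℚ) ≠ 0 := Nat.cast_ne_zero.2 hb
  rw [padicNorm.eq_zpow_of_nonzero (div_ne_zero hb' ha'), padicValRat.div hb' ha',
    padicValRat.of_nat, padicValRat.of_nat, ← zpow_natCast]
  exact zpow_le_zpow_right₀ (mod_cast hp.out.one_le) (by omega)

lemma harmonic'_sub_harmonic' {n n' : ℕ} (h : n ≤ n') :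
    harmonic' n' - harmonic' n = ∑ j ∈ Ico n n', (1 : ℚ) / (j + 1 : ℕ) := by
  rw [harmonic', harmonic', ← sum_Ico_eq_sub _ h]
  push_cast
  rfl

theorem stmt14_general (p : ℕ) [Fact p.Prime] (d k : ℕ) (hk : 0 < k) (s : ℕ)
    (N : Fin k → Fin d → ℕ) (L m : Fin d → ℕ) (hL : ∀ i, L i ≤ N ⟨0, hk⟩ i) :
    ‖((BfamFun N m *
        (harmonic' (p ^ s * ∑ i, L i * m i) -
          harmonic' (p ^ (s + 1) * ∑ i, L i * (m i / p))) : ℚ) : ℚ_[p])‖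
      ≤ (p : ℝ) ^ (s : ℤ) := by
  set B := ∏ j, factorialQuot (N j) m
  have hB : BfamFun N m = B := by simp [B, BfamFun, cast_factorialQuot]
  have hBpos : 0 < B := prod_pos fun j _ => factorialQuot_pos (N j) m
  have hvB : padicValNat p (factorialQuot (N ⟨0, hk⟩) m) ≤ padicValNat p B :=
    (padicValNat_dvd_iff_le hBpos.ne').1
      (pow_padicValNat_dvd.trans (dvd_prod_of_mem _ (mem_univ _)))
  have hle : p ^ (s + 1) * ∑ i, L i * (m i / p) ≤ p ^ s * ∑ i, L i * m i := by
    rw [pow_succ, mul_assoc]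
    exact Nat.mul_le_mul_left _
      ((Nat.mul_le_mul_left p (sum_mul_div_le_sum_mul_div L m p)).trans (Nat.mul_div_le _ _))
  rw [hB, harmonic'_sub_harmonic' hle, mul_sum, Padic.eq_padicNorm, zpow_natCast]
  refine mod_cast padicNorm.sum_le' (fun j hj => ?_) (by positivity)
  rw [mem_Ico] at hj
  rw [mul_one_div]
  exact_mod_cast padicNorm_natCast_div_le p s (a := j + 1) j.succ_ne_zero hBpos.ne'
    ((padicValNat_le_add_padicValNat_factorialQuot p hL (by omega) hj.2).trans
      (Nat.add_le_add_left hvB s))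

/-- For `L ≤ N⁽¹⁾`: `B_N(m)·(H_{pˢ L·m} − H_{p^{s+1} L·⌊m/p⌋}) ∈ p⁻ˢ ℤ_p`. -/
theorem stmt14 (p : ℕ) [Fact p.Prime] (d k : ℕ) (hd : 0 < d) (hk : 0 < k) (s : ℕ)
    (N : Fin k → Fin d → ℕ) (L m : Fin d → ℕ) (hL : ∀ i, L i ≤ N ⟨0, hk⟩ i) :
    ‖((BfamFun N m *
        (harmonic' (p ^ s * ∑ i, L i * m i) -
          harmonic' (p ^ (s + 1) * ∑ i, L i * (m i / p))) : ℚ) : ℚ_[p])‖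
      ≤ (p : ℝ) ^ (s : ℤ) :=
  stmt14_general p d k hk s N L m hL
end

section
/- Let p be a prime, d ≥ 1, k ≥ 1, s ≥ 0, and N^{(1)},...,N^{(k)} ∈ Z^d nonnegative integer vectors. Let v, u, n ∈ Z_{≥0}^d with 0 ≤ v_i < p and 0 ≤ u_i < p^s for all i. Define B_N(m) = ∏_{j=1}^k (∑_i N_i^{(j)} m_i)!/∏_i (m_i!)^{N_i^{(j)}}. Then B_N(v + p·u + p^{s+1}·n)/B_N(v + p·u) − B_N(u + p^s·n)/B_N(u) ∈ p^{s+1}·(B_N(n)/B_N(v + p·u))·Z_p. -/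
/-!
Write `a! = p^⌊a/p⌋ ⌊a/p⌋! a!₍ₚ₎`, where `a!₍ₚ₎` is the product of the integers in `[1, a]` prime
to `p`. For `V = v + p u` with digits `vᵢ < p` this gives `B_N(V) = K(u) B_N(u) P(V)`, where
`P(V)` is a `p`-adic unit and `K(u) = ∏ⱼ p^{tⱼ} (Lⱼu + 1) ⋯ (Lⱼu + tⱼ)`, with `Lⱼ` the linear
forms of `N` and `tⱼ = ⌊Lⱼv / p⌋` the carries. Applied to `u` and to `u + pˢn`, this writes the
quantity to be estimated as `B_N(u + pˢn) / B_N(n) · (K(u + pˢn) P(V') - K(u) P(V))`.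

The first factor is integral: peeling off the base-`p` digits of `u` one at a time gives
`|B_N(u + pˢn)|ₚ ≤ |B_N(n)|ₚ`. In the second, `K` and `P` only move by multiples of `p^{s+1}`:
shifting `Lⱼu` by a multiple of `pˢ` changes `(Lⱼu + 1) ⋯ (Lⱼu + tⱼ)` by a multiple of `pˢ`, and
`p^{tⱼ}` supplies the missing `p` when `tⱼ > 0`; and `(a + M b)!₍ₚ₎ ≡ a!₍ₚ₎ (M!₍ₚ₎)^b` modulo
`M = p^{s+1}`, factors which cancel in `P` because each `Nᵢ⁽ʲ⁾` weights both `Lⱼ` and `mᵢ`.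
-/

open Finset Nat

def pFreeFactorial (p a : ℕ) : ℕ := ∏ x ∈ Icc 1 a with ¬p ∣ x, x

theorem pFreeFactorial_zero (p : ℕ) : pFreeFactorial p 0 = 1 := rfl

theorem pFreeFactorial_succ (p a : ℕ) :
    pFreeFactorial p (a + 1) = pFreeFactorial p a * if p ∣ a + 1 then 1 else a + 1 := by
  simp only [pFreeFactorial, prod_filter, prod_Icc_succ_top (Nat.le_add_left 1 a), ite_not]

theorem pFreeFactorial_pos (p a : ℕ) : 0 < pFreeFactorial p a :=
  prod_pos fun x hx => by simp only [mem_filter, mem_Icc] at hx; omega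

theorem coprime_pFreeFactorial {p : ℕ} (hp : p.Prime) (a : ℕ) :
    p.Coprime (pFreeFactorial p a) :=
  Coprime.prod_right fun _ hx => (Nat.Prime.coprime_iff_not_dvd hp).2 (mem_filter.1 hx).2

theorem factorial_eq_pow_mul_factorial_mul_pFreeFactorial (p a : ℕ) :
    a ! = p ^ (a / p) * (a / p)! * pFreeFactorial p a := by
  induction a with
  | zero => simp [pFreeFactorial_zero]
  | succ a ih =>
    rw [factorial_succ, ih, pFreeFactorial_succ]
    by_cases h : p ∣ a + 1
    · have hdiv := succ_div_of_dvd h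
      rw [if_pos h, hdiv, ← Nat.div_mul_cancel h, hdiv, factorial_succ]
      generalize a / p = q
      ring
    · rw [if_neg h, succ_div_of_not_dvd h]
      ring

theorem natCast_pFreeFactorial_add {p M : ℕ} (hM : p ∣ M) (a : ℕ) :
    (pFreeFactorial p (a + M) : ZMod M) = pFreeFactorial p a * pFreeFactorial p M := by
  induction a with
  | zero => simp [pFreeFactorial_zero]
  | succ a ih =>
    have hdvd : p ∣ a + M + 1 ↔ p ∣ a + 1 := by rw [add_right_comm]; exact Nat.dvd_add_left hM
    rw [add_right_comm, pFreeFactorial_succ, pFreeFactorial_succ, Nat.cast_mul, ih]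
    simp only [hdvd]
    split_ifs <;> push_cast [ZMod.natCast_self, add_zero] <;> ring

theorem natCast_pFreeFactorial_add_mul {p M : ℕ} (hM : p ∣ M) (a b : ℕ) :
    (pFreeFactorial p (a + M * b) : ZMod M) = pFreeFactorial p a * pFreeFactorial p M ^ b := by
  induction b with
  | zero => simp
  | succ b ih =>
    rw [mul_add_one, ← add_assoc, natCast_pFreeFactorial_add hM, ih, pow_succ, mul_assoc]

theorem ascFactorial_modEq {a b n : ℕ} (h : a ≡ b [MOD n]) (t : ℕ) :
    a.ascFactorial t ≡ b.ascFactorial t [MOD n] := by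
  induction t with
  | zero => rfl
  | succ t ih => simpa only [ascFactorial_succ] using (h.add_right t).mul ih

theorem dotProduct_add_mul {ι : Type*} [Fintype ι] (c x y : ι → ℕ) (a : ℕ) :
    (c ⬝ᵥ fun i => x i + a * y i) = c ⬝ᵥ x + a * c ⬝ᵥ y := by
  simp only [dotProduct, mul_add, sum_add_distrib, mul_sum, mul_left_comm]

section Carry

variable {ι : Type*} [Fintype ι]

/-- With the carry `t = ⌊c ⬝ᵥ v / p⌋`, this is `p^t (c ⬝ᵥ u + t)! / (c ⬝ᵥ u)!`. -/
def carryFactor (p : ℕ) (c v u : ι → ℕ) : ℕ :=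
  p ^ (c ⬝ᵥ v / p) * (c ⬝ᵥ u + 1).ascFactorial (c ⬝ᵥ v / p)

theorem carryFactor_add_pow_mul_modEq (p s : ℕ) (c v u n : ι → ℕ) :
    carryFactor p c v (fun i => u i + p ^ s * n i) ≡ carryFactor p c v u [MOD p ^ (s + 1)] := by
  unfold carryFactor
  rcases Nat.eq_zero_or_pos (c ⬝ᵥ v / p) with h0 | hpos
  · simp only [h0, pow_zero, ascFactorial_zero, Nat.ModEq.refl]
  have hshift : c ⬝ᵥ (fun i => u i + p ^ s * n i) + 1 ≡ c ⬝ᵥ u + 1 [MOD p ^ s] := by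
    rw [dotProduct_add_mul, add_right_comm]
    exact Nat.add_mul_mod_self_left _ _ _
  refine Nat.ModEq.of_dvd ?_ ((ascFactorial_modEq hshift _).mul_left' _)
  rw [← pow_add]
  exact pow_dvd_pow p (by omega)

theorem factorial_dotProduct_div_prod {p : ℕ} (hp : 0 < p) (c v u : ι → ℕ)
    (hv : ∀ i, v i < p) :
    (((c ⬝ᵥ fun i => v i + p * u i)! : ℚ) / ∏ i, ((v i + p * u i)! : ℚ) ^ c i)
      = carryFactor p c v u * (((c ⬝ᵥ u)! : ℚ) / ∏ i, ((u i)! : ℚ) ^ c i)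
        * ((pFreeFactorial p (c ⬝ᵥ fun i => v i + p * u i) : ℚ)
          / ∏ i, (pFreeFactorial p (v i + p * u i) : ℚ) ^ c i) := by
  have hdiv : (c ⬝ᵥ fun i => v i + p * u i) / p = c ⬝ᵥ u + c ⬝ᵥ v / p := by
    rw [dotProduct_add_mul, Nat.add_mul_div_left _ _ hp, add_comm]
  have hden : ∏ i, ((v i + p * u i)! : ℚ) ^ c i
      = (p : ℚ) ^ (c ⬝ᵥ u) * (∏ i, ((u i)! : ℚ) ^ c i)
        * ∏ i, (pFreeFactorial p (v i + p * u i) : ℚ) ^ c i := by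
    rw [dotProduct, ← prod_pow_eq_pow_sum, ← prod_mul_distrib, ← prod_mul_distrib]
    refine prod_congr rfl fun i _ => ?_
    rw [factorial_eq_pow_mul_factorial_mul_pFreeFactorial p, Nat.add_mul_div_left _ _ hp,
      Nat.div_eq_of_lt (hv i), zero_add]
    push_cast
    ring
  rw [factorial_eq_pow_mul_factorial_mul_pFreeFactorial p, hdiv, ← factorial_mul_ascFactorial,
    hden, carryFactor]
  have hu : ∏ i, ((u i)! : ℚ) ^ c i ≠ 0 := prod_ne_zero_iff.2 fun i _ => by positivity
  have hP : ∏ i, (pFreeFactorial p (v i + p * u i) : ℚ) ^ c i ≠ 0 :=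
    prod_ne_zero_iff.2 fun i _ => pow_ne_zero _ (Nat.cast_ne_zero.2 (pFreeFactorial_pos _ _).ne')
  field_simp
  push_cast
  ring

end Carry

theorem IsUltrametricDist.norm_mul_sub_mul_le {R : Type*} [NormedRing R] [IsUltrametricDist R] {a a' b b' : R}
    {ε : ℝ} (ha' : ‖a'‖ ≤ 1) (hb : ‖b‖ ≤ 1) (ha : ‖a' - a‖ ≤ ε) (hb' : ‖b' - b‖ ≤ ε) :
    ‖a' * b' - a * b‖ ≤ ε := by
  rw [show a' * b' - a * b = a' * (b' - b) + (a' - a) * b by noncomm_ring]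
  refine (IsUltrametricDist.norm_add_le_max _ _).trans (max_le ?_ ?_)
  · exact (norm_mul_le _ _).trans
      (mul_le_of_le_one_left (norm_nonneg _) ha' |>.trans hb')
  · exact (norm_mul_le _ _).trans
      (mul_le_of_le_one_right (norm_nonneg _) hb |>.trans ha)

theorem Padic.norm_natCast_sub_le_of_modEq {p : ℕ} [Fact p.Prime] {a b e : ℕ}
    (h : a ≡ b [MOD p ^ e]) : ‖(a : ℚ_[p]) - b‖ ≤ (p : ℝ) ^ (-(e : ℤ)) := by
  have h' := (Padic.norm_int_le_pow_iff_dvd (p := p) ((a : ℤ) - b) e).2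
    (by exact_mod_cast (Nat.modEq_iff_dvd.1 h.symm))
  exact_mod_cast h'

section Family

variable {d k : ℕ}

theorem BfamFun_pos (N : Fin k → Fin d → ℕ) (m : Fin d → ℕ) : 0 < BfamFun N m :=
  prod_pos fun _ _ => div_pos (by positivity) (prod_pos fun _ _ => by positivity)

def pFreeRatio (p : ℕ) (N : Fin k → Fin d → ℕ) (m : Fin d → ℕ) : ℚ :=
  ∏ j, ((pFreeFactorial p (N j ⬝ᵥ m) : ℚ) / ∏ i, (pFreeFactorial p (m i) : ℚ) ^ N j i)

theorem BfamFun_add_mul_eq_carryFactor_mul {p : ℕ} (hp : 0 < p) (N : Fin k → Fin d → ℕ)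
    (v u : Fin d → ℕ) (hv : ∀ i, v i < p) :
    BfamFun N (fun i => v i + p * u i)
      = (∏ j, carryFactor p (N j) v u : ℕ) * BfamFun N u
        * pFreeRatio p N (fun i => v i + p * u i) := by
  simp only [BfamFun, pFreeRatio, Nat.cast_prod, ← prod_mul_distrib]
  exact prod_congr rfl fun j _ => factorial_dotProduct_div_prod hp (N j) v u hv

theorem BfamFun_sub_eq_carryFactor_mul_pFreeRatio_sub {p : ℕ} (hp : 0 < p) (s : ℕ)
    (N : Fin k → Fin d → ℕ) (v u n : Fin d → ℕ) (hv : ∀ i, v i < p) :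
    (BfamFun N (fun i => v i + p * u i + p ^ (s + 1) * n i) / BfamFun N (fun i => v i + p * u i)
        - BfamFun N (fun i => u i + p ^ s * n i) / BfamFun N u)
        * BfamFun N (fun i => v i + p * u i) / BfamFun N n
      = BfamFun N (fun i => u i + p ^ s * n i) / BfamFun N n
        * ((∏ j, carryFactor p (N j) v (fun i => u i + p ^ s * n i) : ℕ)
            * pFreeRatio p N (fun i => v i + p * u i + p ^ (s + 1) * n i)
          - (∏ j, carryFactor p (N j) v u : ℕ) * pFreeRatio p N (fun i => v i + p * u i)) := by
  have hV' : (fun i => v i + p * u i + p ^ (s + 1) * n i)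
      = fun i => v i + p * (u i + p ^ s * n i) := by
    ext i
    ring
  have hu := (BfamFun_pos N u).ne'
  have hn := (BfamFun_pos N n).ne'
  rw [sub_mul, div_mul_cancel₀ _ (BfamFun_pos N _).ne', hV',
    BfamFun_add_mul_eq_carryFactor_mul hp N v _ hv, BfamFun_add_mul_eq_carryFactor_mul hp N v u hv]
  field_simp

variable {p : ℕ} [Fact p.Prime]

theorem norm_pFreeRatio (N : Fin k → Fin d → ℕ) (m : Fin d → ℕ) :
    ‖(pFreeRatio p N m : ℚ_[p])‖ = 1 := by
  simp [pFreeRatio, norm_prod, Padic.norm_natCast_eq_one_iff.2 (coprime_pFreeFactorial Fact.out _)]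

theorem norm_pFreeRatio_add_pow_mul_sub_le (N : Fin k → Fin d → ℕ) (x y : Fin d → ℕ) {e : ℕ}
    (he : e ≠ 0) :
    ‖(pFreeRatio p N (fun i => x i + p ^ e * y i) - pFreeRatio p N x : ℚ_[p])‖
      ≤ (p : ℝ) ^ (-(e : ℤ)) := by
  let num : (Fin d → ℕ) → ℕ := fun m => ∏ j, pFreeFactorial p (N j ⬝ᵥ m)
  let den : (Fin d → ℕ) → ℕ := fun m => ∏ j, ∏ i, pFreeFactorial p (m i) ^ N j i
  have hratio (m : Fin d → ℕ) : (pFreeRatio p N m : ℚ_[p]) = num m / den m := by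
    simp [num, den, pFreeRatio, prod_div_distrib]
  have hden (m : Fin d → ℕ) : ‖(den m : ℚ_[p])‖ = 1 := by
    simp [den, norm_prod, Padic.norm_natCast_eq_one_iff.2 (coprime_pFreeFactorial Fact.out _)]
  have hden_ne (m : Fin d → ℕ) : (den m : ℚ_[p]) ≠ 0 := norm_ne_zero_iff.1 (by simp [hden])
  have hcong : num (fun i => x i + p ^ e * y i) * den x
      ≡ num x * den (fun i => x i + p ^ e * y i) [MOD p ^ e] := by
    rw [← ZMod.natCast_eq_natCast_iff]
    simp only [num, den, Nat.cast_mul, Nat.cast_prod, Nat.cast_pow, dotProduct_add_mul,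
      natCast_pFreeFactorial_add_mul (dvd_pow_self p he), mul_pow, ← pow_mul, prod_mul_distrib,
      prod_pow_eq_pow_sum]
    have hexp : ∑ j, N j ⬝ᵥ y = ∑ j, ∑ i, y i * N j i := by simp only [dotProduct, mul_comm]
    rw [hexp]
    ring
  rw [hratio, hratio, div_sub_div _ _ (hden_ne _) (hden_ne _), norm_div, norm_mul, hden, hden,
    mul_one, div_one, mul_comm _ (num x : ℚ_[p])]
  exact_mod_cast Padic.norm_natCast_sub_le_of_modEq hcong

theorem norm_BfamFun_add_mul_le (N : Fin k → Fin d → ℕ) (v u : Fin d → ℕ) (hv : ∀ i, v i < p) :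
    ‖(BfamFun N (fun i => v i + p * u i) : ℚ_[p])‖ ≤ ‖(BfamFun N u : ℚ_[p])‖ := by
  rw [BfamFun_add_mul_eq_carryFactor_mul (Fact.out : p.Prime).pos N v u hv, Rat.cast_mul,
    Rat.cast_mul, norm_mul, norm_mul, norm_pFreeRatio, mul_one, Rat.cast_natCast]
  exact mul_le_of_le_one_left (norm_nonneg _) (IsUltrametricDist.norm_natCast_le_one _ _)

theorem norm_BfamFun_add_pow_mul_le (N : Fin k → Fin d → ℕ) (s : ℕ) (u n : Fin d → ℕ)
    (hu : ∀ i, u i < p ^ s) :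
    ‖(BfamFun N (fun i => u i + p ^ s * n i) : ℚ_[p])‖ ≤ ‖(BfamFun N n : ℚ_[p])‖ := by
  induction s generalizing u with
  | zero =>
    have hu0 (i : Fin d) : u i = 0 := by simpa using hu i
    simp [hu0]
  | succ s ih =>
    have hdigits : (fun i => u i + p ^ (s + 1) * n i)
        = fun i => u i % p + p * (u i / p + p ^ s * n i) := by
      ext i
      rw [mul_add, ← add_assoc, Nat.mod_add_div, pow_succ', mul_assoc]
    rw [hdigits]
    refine (norm_BfamFun_add_mul_le N _ _ fun i => Nat.mod_lt _ (Fact.out : p.Prime).pos).trans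
      (ih _ fun i => Nat.div_lt_of_lt_mul ?_)
    rw [← pow_succ']
    exact hu i

end Family

theorem stmt16_general (p : ℕ) [Fact p.Prime] (d k : ℕ) (s : ℕ)
    (N : Fin k → Fin d → ℕ) (v u n : Fin d → ℕ)
    (hv : ∀ i, v i < p) (hu : ∀ i, u i < p ^ s) :
    ‖(((BfamFun N (fun i => v i + p * u i + p ^ (s + 1) * n i) /
            BfamFun N (fun i => v i + p * u i) -
          BfamFun N (fun i => u i + p ^ s * n i) / BfamFun N u) *
        BfamFun N (fun i => v i + p * u i) / BfamFun N n : ℚ) : ℚ_[p])‖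
      ≤ (p : ℝ) ^ (-(s + 1 : ℤ)) := by
  rw [BfamFun_sub_eq_carryFactor_mul_pFreeRatio_sub (Fact.out : p.Prime).pos s N v u n hv,
    Rat.cast_mul, norm_mul]
  have hquot : ‖((BfamFun N (fun i => u i + p ^ s * n i) / BfamFun N n : ℚ) : ℚ_[p])‖ ≤ 1 := by
    rw [Rat.cast_div, norm_div]
    exact div_le_one_of_le₀ (norm_BfamFun_add_pow_mul_le N s u n hu) (norm_nonneg _)
  refine (mul_le_of_le_one_left (norm_nonneg _) hquot).trans ?_
  rw [Rat.cast_sub, Rat.cast_mul, Rat.cast_mul, Rat.cast_natCast, Rat.cast_natCast]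
  refine IsUltrametricDist.norm_mul_sub_mul_le (IsUltrametricDist.norm_natCast_le_one _ _)
    (norm_pFreeRatio N _).le ?_ ?_
  · exact_mod_cast Padic.norm_natCast_sub_le_of_modEq
      (Nat.ModEq.prod fun j _ => carryFactor_add_pow_mul_modEq p s (N j) v u n)
  · exact_mod_cast norm_pFreeRatio_add_pow_mul_sub_le N _ n (Nat.add_one_ne_zero s)

/-- Hypothesis (iii) of the multivariate Dwork congruence theorem holds for `A = g = B_N`:
`B_N(v+pu+p^{s+1}n)/B_N(v+pu) − B_N(u+pˢn)/B_N(u) ∈ p^{s+1}(B_N(n)/B_N(v+pu))ℤ_p`. -/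
theorem stmt16 (p : ℕ) [Fact p.Prime] (d k : ℕ) (hd : 0 < d) (hk : 0 < k) (s : ℕ)
    (N : Fin k → Fin d → ℕ) (v u n : Fin d → ℕ)
    (hv : ∀ i, v i < p) (hu : ∀ i, u i < p ^ s) :
    ‖(((BfamFun N (fun i => v i + p * u i + p ^ (s + 1) * n i) /
            BfamFun N (fun i => v i + p * u i) -
          BfamFun N (fun i => u i + p ^ s * n i) / BfamFun N u) *
        BfamFun N (fun i => v i + p * u i) / BfamFun N n : ℚ) : ℚ_[p])‖
      ≤ (p : ℝ) ^ (-(s + 1 : ℤ)) :=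
  stmt16_general p d k s N v u n hv hu
end

section
/- Let p be a prime, d ≥ 1, k ≥ 1, s ≥ 0. Let N^{(1)},...,N^{(k)} ∈ Z_{≥0}^d and let n ∈ Z_{≥0}^d, u ∈ Z^d with 0 ≤ u_i < p^s. Define B_N(m) = ∏_{j=1}^k (∑_i N_i^{(j)} m_i)!/∏_i (m_i!)^{N_i^{(j)}}. Then B_N(p·u + p^{s+1}·n)/B_N(u + p^s·n) − B_N(p·u)/B_N(u) ∈ p^{s+1}·(B_N(p·u)/B_N(u))·Z_p; equivalently B_N(p·u + p^{s+1}·n)/B_N(u + p^s·n) = (B_N(p·u)/B_N(u))·(1 + O(p^{s+1})) where O(p^{s+1}) denotes an element of p^{s+1}·Z_p. -/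
open Finset

theorem Function.Periodic.prod_range_add {α : Type*} [CommMonoid α] {g : ℕ → α} {M : ℕ}
    (hg : Function.Periodic g M) (c : ℕ) :
    ∏ j ∈ range M, g (c + j) = ∏ j ∈ range M, g j := by
  induction c with
  | zero => simp
  | succ c ih =>
    rw [← ih]
    rcases M with _ | M
    · simp
    rw [prod_range_succ, prod_range_succ' (fun j => g (c + j))]
    congr 1
    · exact prod_congr rfl fun j _ => by rw [Nat.add_right_comm, Nat.add_assoc]
    · rw [show c + 1 + M = c + (M + 1) by omega, hg c, Nat.add_zero]

theorem Function.Periodic.prod_range_add_mul {α : Type*} [CommMonoid α] {g : ℕ → α} {M : ℕ}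
    (hg : Function.Periodic g M) (c b : ℕ) :
    ∏ j ∈ range (c + M * b), g j = (∏ j ∈ range c, g j) * (∏ j ∈ range M, g j) ^ b := by
  induction b with
  | zero => simp
  | succ b ih =>
    rw [Nat.mul_succ, ← Nat.add_assoc, Finset.prod_range_add, ih, hg.prod_range_add, pow_succ,
      mul_assoc]

def primeToFactorial (p M : ℕ) : ℕ :=
  ∏ j ∈ range M, if p ∣ j + 1 then 1 else j + 1

section primeToFactorial

variable {p : ℕ}

theorem primeToFactorial_pos (M : ℕ) : 0 < primeToFactorial p M :=
  prod_pos fun j _ => by split <;> omega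

theorem Nat.Prime.coprime_primeToFactorial (hp : p.Prime) (M : ℕ) :
    Nat.Coprime p (primeToFactorial p M) :=
  Nat.Coprime.prod_right fun j _ => by
    split_ifs with h
    · exact Nat.coprime_one_right p
    · exact hp.coprime_iff_not_dvd.mpr h

theorem prod_range_mul_ite_dvd (hp : 0 < p) (a : ℕ) :
    ∏ j ∈ range (p * a), (if p ∣ j + 1 then j + 1 else 1) = p ^ a * a.factorial := by
  induction a with
  | zero => simp
  | succ a ih =>
    have block : ∏ j ∈ range p, (if p ∣ p * a + j + 1 then p * a + j + 1 else 1)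
        = p * (a + 1) := by
      rw [prod_eq_single_of_mem (p - 1) (mem_range.mpr (by omega)),
        show p * a + (p - 1) + 1 = p * (a + 1) by rw [Nat.mul_succ]; omega,
        if_pos (dvd_mul_right p _)]
      intro j hj hne
      have hj : j + 1 < p := by rw [mem_range] at hj; omega
      refine if_neg ?_
      rw [Nat.add_assoc, Nat.dvd_add_right (dvd_mul_right p a)]
      exact Nat.not_dvd_of_pos_of_lt (Nat.succ_pos j) hj
    rw [Nat.mul_succ, prod_range_add, ih, block, Nat.factorial_succ, pow_succ]
    ring

theorem factorial_mul_eq_pow_mul (hp : 0 < p) (a : ℕ) :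
    (p * a).factorial = p ^ a * a.factorial * primeToFactorial p (p * a) := by
  rw [← prod_range_mul_ite_dvd hp, primeToFactorial, ← prod_mul_distrib,
    ← prod_range_add_one_eq_factorial]
  exact prod_congr rfl fun j _ => by split_ifs <;> simp

theorem primeToFactorial_add_mul {M : ℕ} (hM : p ∣ M) (c b : ℕ) :
    (primeToFactorial p (c + M * b) : ZMod M)
      = primeToFactorial p c * (primeToFactorial p M : ZMod M) ^ b := by
  set g : ℕ → ZMod M := fun j => if p ∣ j + 1 then 1 else ((j + 1 : ℕ) : ZMod M)
  have hcast : ∀ x, (primeToFactorial p x : ZMod M) = ∏ j ∈ range x, g j := fun x => by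
    rw [primeToFactorial, Nat.cast_prod]
    exact prod_congr rfl fun j _ => by split_ifs <;> simp [g, *]
  have hg : Function.Periodic g M := fun j => by
    have hdvd : p ∣ j + M + 1 ↔ p ∣ j + 1 := by
      rw [Nat.add_right_comm, Nat.dvd_add_left hM]
    have hcast : ((j + M + 1 : ℕ) : ZMod M) = ((j + 1 : ℕ) : ZMod M) := by
      push_cast
      rw [ZMod.natCast_self, add_zero]
    show (if p ∣ j + M + 1 then 1 else ((j + M + 1 : ℕ) : ZMod M)) = g j
    simp only [hdvd, hcast, g]
  rw [hcast, hcast, hcast, hg.prod_range_add_mul]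

end primeToFactorial

section Family

variable {R : Type*} [CommMonoid R] {d k : ℕ}

/-- The numerator `∏ⱼ f(∑ᵢ Nᵢ⁽ʲ⁾ mᵢ)` of `B_N(m)`, with the factorial replaced by `f`. -/
def famNum (f : ℕ → R) (N : Fin k → Fin d → ℕ) (m : Fin d → ℕ) : R :=
  ∏ j, f (∑ i, N j i * m i)

/-- The denominator `∏ⱼ ∏ᵢ f(mᵢ)^{Nᵢ⁽ʲ⁾}` of `B_N(m)`, with the factorial replaced by `f`. -/
def famDen (f : ℕ → R) (N : Fin k → Fin d → ℕ) (m : Fin d → ℕ) : R :=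
  ∏ j, ∏ i, f (m i) ^ N j i

variable (N : Fin k → Fin d → ℕ)

theorem BfamFun_eq_div (m : Fin d → ℕ) :
    BfamFun N m = ((famNum Nat.factorial N m : ℕ) : ℚ) / (famDen Nat.factorial N m : ℕ) := by
  simp only [BfamFun, famNum, famDen, Nat.cast_prod, Nat.cast_pow, prod_div_distrib]

theorem famNum_mul (f g : ℕ → R) (m : Fin d → ℕ) :
    famNum (f * g) N m = famNum f N m * famNum g N m :=
  prod_mul_distrib

theorem famDen_mul (f g : ℕ → R) (m : Fin d → ℕ) :
    famDen (f * g) N m = famDen f N m * famDen g N m := by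
  simp only [famDen, Pi.mul_apply, mul_pow, prod_mul_distrib]

theorem famNum_pow_eq_famDen_pow (x : R) (m : Fin d → ℕ) :
    famNum (x ^ ·) N m = famDen (x ^ ·) N m := by
  simp only [famNum, famDen, ← pow_mul, prod_pow_eq_pow_sum, mul_comm]

theorem famNum_mul_left (f : ℕ → R) (c : ℕ) (m : Fin d → ℕ) :
    famNum f N (fun i => c * m i) = famNum (fun a => f (c * a)) N m := by
  simp only [famNum, mul_sum, mul_left_comm c]

theorem famDen_mul_left (f : ℕ → R) (c : ℕ) (m : Fin d → ℕ) :
    famDen f N (fun i => c * m i) = famDen (fun a => f (c * a)) N m :=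
  rfl

theorem famNum_natCast {S : Type*} [CommSemiring S] (f : ℕ → ℕ) (m : Fin d → ℕ) :
    ((famNum f N m : ℕ) : S) = famNum (fun a => (f a : S)) N m :=
  Nat.cast_prod _ _

theorem famDen_natCast {S : Type*} [CommSemiring S] (f : ℕ → ℕ) (m : Fin d → ℕ) :
    ((famDen f N m : ℕ) : S) = famDen (fun a => (f a : S)) N m := by
  simp only [famDen, Nat.cast_prod, Nat.cast_pow]

theorem famNum_add_mul {f : ℕ → R} {M : ℕ} {E : R} (hf : ∀ a b, f (a + M * b) = f a * E ^ b)
    (u n : Fin d → ℕ) :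
    famNum f N (fun i => u i + M * n i) = famNum f N u * E ^ ∑ j, ∑ i, N j i * n i := by
  simp only [famNum, mul_add, sum_add_distrib, mul_left_comm _ M, ← mul_sum, hf,
    prod_mul_distrib, prod_pow_eq_pow_sum]

theorem famDen_add_mul {f : ℕ → R} {M : ℕ} {E : R} (hf : ∀ a b, f (a + M * b) = f a * E ^ b)
    (u n : Fin d → ℕ) :
    famDen f N (fun i => u i + M * n i) = famDen f N u * E ^ ∑ j, ∑ i, N j i * n i := by
  simp only [famDen, hf, mul_pow, ← pow_mul, prod_mul_distrib, prod_pow_eq_pow_sum, mul_comm]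

theorem famNum_pos {f : ℕ → ℕ} (hf : ∀ a, 0 < f a) (m : Fin d → ℕ) : 0 < famNum f N m :=
  prod_pos fun _ _ => hf _

theorem famDen_pos {f : ℕ → ℕ} (hf : ∀ a, 0 < f a) (m : Fin d → ℕ) : 0 < famDen f N m :=
  prod_pos fun _ _ => prod_pos fun _ _ => pow_pos (hf _) _

theorem coprime_famNum {p : ℕ} {f : ℕ → ℕ} (hf : ∀ a, Nat.Coprime p (f a))
    (m : Fin d → ℕ) : Nat.Coprime p (famNum f N m) :=
  Nat.Coprime.prod_right fun _ _ => hf _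

theorem coprime_famDen {p : ℕ} {f : ℕ → ℕ} (hf : ∀ a, Nat.Coprime p (f a))
    (m : Fin d → ℕ) : Nat.Coprime p (famDen f N m) :=
  Nat.Coprime.prod_right fun _ _ => Nat.Coprime.prod_right fun _ _ => (hf _).pow_right _

end Family

theorem BfamFun_mul_div_BfamFun {p : ℕ} (hp : 0 < p) {d k : ℕ} (N : Fin k → Fin d → ℕ)
    (v : Fin d → ℕ) :
    BfamFun N (fun i => p * v i) / BfamFun N v
      = ((famNum (fun a => primeToFactorial p (p * a)) N v : ℕ) : ℚ)
        / (famDen (fun a => primeToFactorial p (p * a)) N v : ℕ) := by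
  have hfac : (fun a => (p * a).factorial)
      = (p ^ ·) * Nat.factorial * fun a => primeToFactorial p (p * a) :=
    funext (factorial_mul_eq_pow_mul hp)
  have hnum := famNum_pos N Nat.factorial_pos v
  have hden := famDen_pos N Nat.factorial_pos v
  have hpow := famDen_pos N (fun a => pow_pos hp a) v
  have hunit := famDen_pos N (fun a => primeToFactorial_pos (p := p) (p * a)) v
  rw [BfamFun_eq_div, BfamFun_eq_div, famNum_mul_left, famDen_mul_left, hfac, famNum_mul,
    famNum_mul, famDen_mul, famDen_mul, famNum_pow_eq_famDen_pow]
  push_cast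
  field_simp

theorem Padic.norm_natCast_div_sub_one_le {p : ℕ} [Fact p.Prime] {x y e : ℕ}
    (hy : Nat.Coprime p y) (hxy : (x : ZMod (p ^ e)) = y) :
    ‖((x / y - 1 : ℚ) : ℚ_[p])‖ ≤ (p : ℝ) ^ (-(e : ℤ)) := by
  have hy0 : (y : ℚ) ≠ 0 := Nat.cast_ne_zero.mpr fun h =>
    (Fact.out : p.Prime).ne_one (Nat.coprime_zero_right p |>.mp (h ▸ hy))
  have hdvd : ((p ^ e : ℕ) : ℤ) ∣ (x : ℤ) - y :=
    (ZMod.intCast_eq_intCast_iff_dvd_sub _ _ _).mp (by exact_mod_cast hxy.symm)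
  rw [div_sub_one hy0]
  push_cast
  rw [norm_div, Padic.norm_natCast_eq_one_iff.mpr hy, div_one]
  exact_mod_cast (Padic.norm_int_le_pow_iff_dvd (x - y : ℤ) e).mpr (by exact_mod_cast hdvd)

theorem stmt17_general (p : ℕ) [Fact p.Prime] (d k : ℕ) (s : ℕ)
    (N : Fin k → Fin d → ℕ) (n u : Fin d → ℕ) :
    ‖(((BfamFun N (fun i => p * u i + p ^ (s + 1) * n i) /
            BfamFun N (fun i => u i + p ^ s * n i) -
          BfamFun N (fun i => p * u i) / BfamFun N u) /
        (BfamFun N (fun i => p * u i) / BfamFun N u) : ℚ) : ℚ_[p])‖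
      ≤ (p : ℝ) ^ (-(s + 1 : ℤ)) := by
  have hp : p.Prime := Fact.out
  have hpm : (fun i => p * u i + p ^ (s + 1) * n i) = fun i => p * (u i + p ^ s * n i) := by
    funext i
    ring
  have hunit : BfamFun N (fun i => p * u i) / BfamFun N u ≠ 0 := by
    rw [BfamFun_mul_div_BfamFun hp.pos]
    exact div_ne_zero (by exact_mod_cast (famNum_pos N (fun a => primeToFactorial_pos _) u).ne')
      (by exact_mod_cast (famDen_pos N (fun a => primeToFactorial_pos _) u).ne')
  rw [hpm, sub_div, div_self hunit, BfamFun_mul_div_BfamFun hp.pos,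
    BfamFun_mul_div_BfamFun hp.pos, div_div_div_eq, ← Nat.cast_mul, ← Nat.cast_mul,
    show -(s + 1 : ℤ) = -((s + 1 : ℕ) : ℤ) by push_cast; rfl]
  set C : ℕ → ℕ := fun a => primeToFactorial p (p * a)
  have hC (a b : ℕ) : (C (a + p ^ s * b) : ZMod (p ^ (s + 1)))
      = C a * (primeToFactorial p (p ^ (s + 1)) : ZMod (p ^ (s + 1))) ^ b := by
    simp only [C, mul_add, ← mul_assoc, ← pow_succ']
    exact primeToFactorial_add_mul (dvd_pow_self p s.succ_ne_zero) _ _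
  refine Padic.norm_natCast_div_sub_one_le ?_ ?_
  · exact Nat.Coprime.mul_right (coprime_famDen N (fun a => hp.coprime_primeToFactorial _) _)
      (coprime_famNum N (fun a => hp.coprime_primeToFactorial _) u)
  · rw [Nat.cast_mul, Nat.cast_mul, famNum_natCast, famDen_natCast, famNum_natCast,
      famDen_natCast, famNum_add_mul N hC, famDen_add_mul N hC]
    ring

/-- `B_N(pu + p^{s+1}n)/B_N(u + pˢn) = (B_N(pu)/B_N(u))·(1 + O(p^{s+1}))`, i.e. the
difference of the two quotients lies in `p^{s+1}·(B_N(pu)/B_N(u))·ℤ_p`. -/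
theorem stmt17 (p : ℕ) [Fact p.Prime] (d k : ℕ) (hd : 0 < d) (hk : 0 < k) (s : ℕ)
    (N : Fin k → Fin d → ℕ) (n u : Fin d → ℕ) (hu : ∀ i, u i < p ^ s) :
    ‖(((BfamFun N (fun i => p * u i + p ^ (s + 1) * n i) /
            BfamFun N (fun i => u i + p ^ s * n i) -
          BfamFun N (fun i => p * u i) / BfamFun N u) /
        (BfamFun N (fun i => p * u i) / BfamFun N u) : ℚ) : ℚ_[p])‖
      ≤ (p : ℝ) ^ (-(s + 1 : ℤ)) :=
  stmt17_general p d k s N n u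
end
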